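/- arXiv:1104.5168 — 8 statements merged into one kernel-verified Lean document; each statement's English description precedes it below -/
import Mathlib

section
/- For every integer k ≥ 2 there exists a unique β_k with π/2 < β_k < π such that sin^2(β_k) * h_{k-1}(β_k) = h_k(β_k), where h_k(t) = ∫_0^t sin^{2k-1}(τ) dτ. -/
open Real

/-!
The derivative of `sin² t · h_{k-1}(t) - h_k(t)` is `2 sin t cos t · h_{k-1}(t)`, since the two
`sin^{2k-1}` terms cancel; it is negative on `(π/2, π)`, so the function is strictly decreasing
there. It is positive at `π/2` by Wallis' reduction formula and equals `-h_k(π) < 0` at `π`, so the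
intermediate value theorem gives exactly one zero.
-/

open Set intervalIntegral

theorem StrictAntiOn.existsUnique_eq_of_mem_Ioo {α δ : Type*} [ConditionallyCompleteLinearOrder α]
    [TopologicalSpace α] [OrderTopology α] [DenselyOrdered α] [LinearOrder δ] [TopologicalSpace δ]
    [OrderClosedTopology δ] {f : α → δ} {a b : α} {c : δ} (hab : a ≤ b)
    (hf : ContinuousOn f (Icc a b)) (hanti : StrictAntiOn f (Icc a b)) (hc : c ∈ Ioo (f b) (f a)) :
    ∃! x, x ∈ Ioo a b ∧ f x = c := by
  obtain ⟨x, hx, hfx⟩ := intermediate_value_Ioo' hab hf hc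
  refine ⟨x, ⟨hx, hfx⟩, fun y ⟨hy, hfy⟩ => ?_⟩
  exact hanti.injOn (Ioo_subset_Icc_self hy) (Ioo_subset_Icc_self hx) (hfy.trans hfx.symm)

noncomputable def sinPowIntegral (n : ℕ) (t : ℝ) : ℝ :=
  ∫ τ in (0 : ℝ)..t, sin τ ^ n

theorem hasDerivAt_sinPowIntegral (n : ℕ) (t : ℝ) :
    HasDerivAt (sinPowIntegral n) (sin t ^ n) t :=
  ((continuous_sin.pow n).integral_hasStrictDerivAt 0 t).hasDerivAt

theorem sinPowIntegral_pos (n : ℕ) {t : ℝ} (ht₀ : 0 < t) (htπ : t ≤ π) :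
    0 < sinPowIntegral n t :=
  intervalIntegral_pos_of_pos_on ((continuous_sin.pow n).intervalIntegrable 0 t)
    (fun _ hx => pow_pos (sin_pos_of_pos_of_lt_pi hx.1 (hx.2.trans_le htπ)) n) ht₀

/-- `sin^2 · h_{k-1} - h_k` in terms of `n = 2k - 3`. -/
noncomputable def sinPowGap (n : ℕ) (t : ℝ) : ℝ :=
  sin t ^ 2 * sinPowIntegral n t - sinPowIntegral (n + 2) t

theorem hasDerivAt_sinPowGap (n : ℕ) (t : ℝ) :
    HasDerivAt (sinPowGap n) (2 * sin t * cos t * sinPowIntegral n t) t := by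
  have hsq : HasDerivAt (fun t => sin t ^ 2) ((2 : ℕ) * sin t ^ (2 - 1) * cos t) t :=
    (hasDerivAt_sin t).pow 2
  have hgap : HasDerivAt (sinPowGap n) ((2 : ℕ) * sin t ^ (2 - 1) * cos t * sinPowIntegral n t
      + sin t ^ 2 * sin t ^ n - sin t ^ (n + 2)) t :=
    (hsq.mul (hasDerivAt_sinPowIntegral n t)).sub (hasDerivAt_sinPowIntegral (n + 2) t)
  convert hgap using 1
  push_cast
  ring

theorem continuous_sinPowGap (n : ℕ) : Continuous (sinPowGap n) :=
  continuous_iff_continuousAt.2 fun t => (hasDerivAt_sinPowGap n t).continuousAt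

theorem strictAntiOn_sinPowGap (n : ℕ) : StrictAntiOn (sinPowGap n) (Icc (π / 2) π) := by
  refine strictAntiOn_of_hasDerivWithinAt_neg (convex_Icc _ _)
    (continuous_sinPowGap n).continuousOn (fun t _ => (hasDerivAt_sinPowGap n t).hasDerivWithinAt)
    fun t ht => ?_
  rw [interior_Icc] at ht
  have hsin : 0 < sin t := sin_pos_of_pos_of_lt_pi (by linarith [ht.1, pi_pos]) ht.2
  have hcos : cos t < 0 := cos_neg_of_pi_div_two_lt_of_lt ht.1 (by linarith [ht.2, pi_pos])
  have hI : 0 < sinPowIntegral n t := sinPowIntegral_pos n (by linarith [ht.1, pi_pos]) ht.2.le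
  have : 0 < 2 * sin t * sinPowIntegral n t := by positivity
  nlinarith

theorem sinPowGap_pi_div_two_pos (n : ℕ) : 0 < sinPowGap n (π / 2) := by
  have hwallis :
      sinPowIntegral (n + 2) (π / 2) = (n + 1) / (n + 2) * sinPowIntegral n (π / 2) := by
    simp [sinPowIntegral, integral_sin_pow]
  have hfrac : ((n : ℝ) + 1) / (n + 2) < 1 := by
    rw [div_lt_one (by positivity)]
    linarith
  have hI := sinPowIntegral_pos n (half_pos pi_pos) (by linarith [pi_pos])
  rw [sinPowGap, hwallis, sin_pi_div_two, one_pow, one_mul]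
  nlinarith

theorem sinPowGap_pi_neg (n : ℕ) : sinPowGap n π < 0 := by
  simpa [sinPowGap] using sinPowIntegral_pos (n + 2) pi_pos le_rfl

theorem exists_unique_beta (k : ℕ) (hk : 2 ≤ k)
    (h : ℕ → ℝ → ℝ)
    (hh : ∀ m : ℕ, ∀ t : ℝ, h m t = ∫ τ in (0:ℝ)..t, Real.sin τ ^ (2 * m - 1)) :
    ∃! β : ℝ, β ∈ Set.Ioo (Real.pi / 2) Real.pi ∧
      Real.sin β ^ 2 * h (k - 1) β = h k β := by
  set n := 2 * (k - 1) - 1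
  have hgap : ∀ t, sin t ^ 2 * h (k - 1) t = h k t ↔ sinPowGap n t = 0 := by
    intro t
    have hexp : 2 * k - 1 = n + 2 := by omega
    rw [sinPowGap, sinPowIntegral, sinPowIntegral, hh, hh, hexp, sub_eq_zero]
  simp only [hgap]
  exact (strictAntiOn_sinPowGap n).existsUnique_eq_of_mem_Ioo (by linarith [pi_pos])
    (continuous_sinPowGap n).continuousOn ⟨sinPowGap_pi_neg n, sinPowGap_pi_div_two_pos n⟩
end

section
/- Let k ≥ 2 and let β_k ∈ (π/2, π) be the unique solution of sin^2(β_k) h_{k-1}(β_k) = h_k(β_k), where h_k(t) = ∫_0^t sin^{2k-1}(τ) dτ. Then sin^2(β_k) > (2k-2)/(2k-1). -/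
open Real

theorem sin_sq_beta_lower_bound (k : ℕ) (hk : 2 ≤ k)
    (h : ℕ → ℝ → ℝ)
    (hh : ∀ m : ℕ, ∀ t : ℝ, h m t = ∫ τ in (0:ℝ)..t, Real.sin τ ^ (2 * m - 1))
    (β : ℝ) (hβ : β ∈ Set.Ioo (Real.pi / 2) Real.pi)
    (heq : Real.sin β ^ 2 * h (k - 1) β = h k β) :
    (2 * (k : ℝ) - 2) / (2 * (k : ℝ) - 1) < Real.sin β ^ 2 := by
  obtain ⟨m, rfl⟩ : ∃ m, k = m + 2 := ⟨k - 2, by omega⟩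
  obtain ⟨h1, h2⟩ := hβ
  have hpi := Real.pi_pos
  have hβpos : 0 < β := lt_trans (by linarith) h1
  have hsin : 0 < Real.sin β := Real.sin_pos_of_pos_of_lt_pi hβpos h2
  have hcos : Real.cos β < 0 :=
    Real.cos_neg_of_pi_div_two_lt_of_lt h1 (by linarith)
  have hI : 0 < ∫ τ in (0:ℝ)..β, Real.sin τ ^ (2 * m + 1) := by
    apply intervalIntegral.intervalIntegral_pos_of_pos_on
    · exact (Real.continuous_sin.pow _).intervalIntegrable 0 β
    · intro x hx
      exact pow_pos (Real.sin_pos_of_pos_of_lt_pi hx.1 (hx.2.trans h2)) _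
    · exact hβpos
  have key := integral_sin_pow (a := 0) (b := β) (2 * m + 1)
  rw [hh, hh] at heq
  have e1 : 2 * (m + 2 - 1) - 1 = 2 * m + 1 := by omega
  have e2 : 2 * (m + 2) - 1 = 2 * m + 1 + 2 := by omega
  rw [e1, e2] at heq
  rw [key] at heq
  simp only [Real.sin_zero, Real.cos_zero, ne_eq] at heq
  set I := ∫ τ in (0:ℝ)..β, Real.sin τ ^ (2 * m + 1) with hIdef
  have hzero : (0:ℝ) ^ (2 * m + 1 + 1) = 0 := by simp
  rw [hzero] at heq
  have hP : 0 < Real.sin β ^ (2 * m + 1 + 1) * (-Real.cos β) :=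
    mul_pos (pow_pos hsin _) (by linarith)
  have hm3 : (0:ℝ) < 2 * (m:ℝ) + 3 := by positivity
  have hgoal : ((2:ℝ) * ((m:ℝ) + 2) - 2) / (2 * ((m:ℝ) + 2) - 1) < Real.sin β ^ 2 := by
    rw [div_lt_iff₀ (by linarith)]
    push_cast at heq
    have heq2 : Real.sin β ^ 2 * I * (2 * (m:ℝ) + 3) =
        Real.sin β ^ (2 * m + 1 + 1) * (-Real.cos β) + (2 * (m:ℝ) + 2) * I := by
      have heq' : Real.sin β ^ 2 * I =
          (Real.sin β ^ (2 * m + 1 + 1) * (-Real.cos β) + (2 * (m:ℝ) + 2) * I) / (2 * (m:ℝ) + 3) := by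
        rw [heq]; ring
      rw [eq_div_iff (ne_of_gt hm3)] at heq'
      linarith
    nlinarith [heq2, hI, hP]
  push_cast
  convert hgoal using 2
end

section
/- Let β_k ∈ (π/2, π) be defined for each k ≥ 2 as the unique solution in (π/2, π) of sin^2(β) h_{k-1}(β) = h_k(β), where h_k(t) = ∫_0^t sin^{2k-1}(τ) dτ. Then β_k → π/2 as k → ∞. -/
/-!
By the reduction formula `∫₀ᵇ sin^(n+2) = -sin^(n+1) b cos b / (n+2) + (n+1)/(n+2) ∫₀ᵇ sin^n`,
the defining equation of `β_k` (with `n = 2k - 3`) becomes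
`(sin² β_k - (2k-2)/(2k-1)) h_{k-1}(β_k) = -sin^(2k-2) β_k cos β_k / (2k-1) ≥ 0`,
because `cos β_k ≤ 0` on `(π/2, π)`. As `h_{k-1}(β_k) > 0`, this gives `cos² β_k ≤ 1/(2k-1)`,
so `cos β_k → 0` and `β_k = arccos (cos β_k) → arccos 0 = π/2`.
-/

open Real Filter Topology

theorem intervalIntegral_sin_pow_pos (n : ℕ) {b : ℝ} (hb : 0 < b) (hbπ : b ≤ π) :
    0 < ∫ x in (0 : ℝ)..b, sin x ^ n :=
  intervalIntegral.intervalIntegral_pos_of_pos_on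
    ((continuous_sin.pow n).intervalIntegrable 0 b)
    (fun _ hx ↦ pow_pos (sin_pos_of_pos_of_lt_pi hx.1 (hx.2.trans_le hbπ)) n) hb

theorem cos_sq_mul_le_one_of_sin_sq_mul_integral_eq (n : ℕ) {b : ℝ} (hb : π / 2 ≤ b)
    (hbπ : b < π)
    (heq : sin b ^ 2 * ∫ x in (0 : ℝ)..b, sin x ^ n = ∫ x in (0 : ℝ)..b, sin x ^ (n + 2)) :
    cos b ^ 2 * (n + 2) ≤ 1 := by
  rw [integral_sin_pow, sin_zero, zero_pow n.succ_ne_zero, zero_mul, zero_sub] at heq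
  set I := ∫ x in (0 : ℝ)..b, sin x ^ n
  have hI : 0 < I := intervalIntegral_sin_pow_pos n (by linarith [pi_pos]) hbπ.le
  have hcos : cos b ≤ 0 := cos_nonpos_of_pi_div_two_le_of_le hb (by linarith [pi_pos])
  have hboundary : 0 ≤ -(sin b ^ (n + 1) * cos b) :=
    neg_nonneg.mpr (mul_nonpos_of_nonneg_of_nonpos
      (pow_nonneg (sin_nonneg_of_nonneg_of_le_pi (by linarith [pi_pos]) hbπ.le) _) hcos)
  have hsin : (n + 1 : ℝ) ≤ sin b ^ 2 * (n + 2) := by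
    have : sin b ^ 2 * (n + 2) * I = -(sin b ^ (n + 1) * cos b) + (n + 1) * I := by
      field_simp at heq
      linarith
    nlinarith
  nlinarith [sin_sq_add_cos_sq b]

theorem tendsto_zero_of_sq_mul_le_one {ι : Type*} {l : Filter ι} {u a : ι → ℝ}
    (ha : Tendsto a l atTop) (hle : ∀ᶠ i in l, u i ^ 2 * a i ≤ 1) : Tendsto u l (𝓝 0) := by
  have hsq : Tendsto (fun i ↦ u i ^ 2) l (𝓝 0) := by
    refine tendsto_of_tendsto_of_tendsto_of_le_of_le' tendsto_const_nhds ha.inv_tendsto_atTop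
      (Eventually.of_forall fun i ↦ sq_nonneg (u i)) ?_
    filter_upwards [hle, ha.eventually_gt_atTop 0] with i hi hpos
    rwa [Pi.inv_apply, inv_eq_one_div, le_div_iff₀ hpos]
  rw [tendsto_zero_iff_abs_tendsto_zero]
  simpa [Function.comp_def, sqrt_sq_eq_abs] using (continuous_sqrt.tendsto 0).comp hsq

theorem beta_tendsto_pi_div_two
    (h : ℕ → ℝ → ℝ)
    (hh : ∀ m : ℕ, ∀ t : ℝ, h m t = ∫ τ in (0:ℝ)..t, Real.sin τ ^ (2 * m - 1))
    (β : ℕ → ℝ)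
    (hβ : ∀ k : ℕ, 2 ≤ k → β k ∈ Set.Ioo (Real.pi / 2) Real.pi ∧
      Real.sin (β k) ^ 2 * h (k - 1) (β k) = h k (β k)) :
    Filter.Tendsto β Filter.atTop (nhds (Real.pi / 2)) := by
  have hcos : Tendsto (fun k ↦ cos (β k)) atTop (𝓝 0) := by
    refine tendsto_zero_of_sq_mul_le_one tendsto_natCast_atTop_atTop ?_
    filter_upwards [eventually_ge_atTop 2] with k hk
    obtain ⟨⟨hb, hbπ⟩, heq⟩ := hβ k hk
    rw [hh, hh, show 2 * (k - 1) - 1 = 2 * k - 3 by omega,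
      show 2 * k - 1 = 2 * k - 3 + 2 by omega] at heq
    have hk' : (k : ℝ) ≤ ((2 * k - 3 : ℕ) : ℝ) + 2 := by
      exact_mod_cast (by omega : k ≤ 2 * k - 3 + 2)
    calc cos (β k) ^ 2 * k ≤ cos (β k) ^ 2 * (((2 * k - 3 : ℕ) : ℝ) + 2) := by gcongr
      _ ≤ 1 := cos_sq_mul_le_one_of_sin_sq_mul_integral_eq _ hb.le hbπ heq
  have hβ_eq : ∀ᶠ k in atTop, arccos (cos (β k)) = β k := by
    filter_upwards [eventually_ge_atTop 2] with k hk
    obtain ⟨⟨hb, hbπ⟩, -⟩ := hβ k hk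
    exact arccos_cos (by linarith [pi_pos]) hbπ.le
  simpa [arccos_zero] using ((continuous_arccos.tendsto 0).comp hcos).congr' hβ_eq
end

section
/- Let f be a raked trigonometric polynomial of degree at most 2k-1 with zero constant term, f not identically zero, and let t_1,...,t_n be distinct roots of f on the circle with multiplicities m_1,...,m_n, such that no two of the t_i are antipodal (t_i ≠ t_j + π for all i, j). Then m_1 + ... + m_n ≤ 2k-1. -/
/-!
Substituting `w = exp (2 i s)` turns `exp (i (2k - 1) s) f(s)` into a complex polynomial `Q(w)` of
degree at most `2k - 1`. Since `s ↦ exp (2 i s)` has nonvanishing derivative, it preserves orders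
of vanishing, so a root of `f` of multiplicity `m` at `t` is a root of `Q` of multiplicity at least
`m` at `exp (2 i t)`. Distinct, pairwise non-antipodal points of `[0, 2π)` have distinct images
under `t ↦ exp (2 i t)`, and the multiplicities of distinct roots of `Q` add up to at most its
degree.
-/

open Real Finset

open Polynomial in
theorem Polynomial.sum_rootMultiplicity_le_natDegree {R : Type*} [CommRing R] [IsDomain R]
    [DecidableEq R] (p : R[X]) (s : Finset R) :
    ∑ x ∈ s, p.rootMultiplicity x ≤ p.natDegree := by
  simp_rw [← count_roots]
  calc ∑ x ∈ s, p.roots.count x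
      ≤ ∑ x ∈ s ∪ p.roots.toFinset, p.roots.count x := sum_le_sum_of_subset subset_union_left
    _ = Multiset.card p.roots := Multiset.sum_count_eq_card fun x hx => by simp [hx]
    _ ≤ p.natDegree := card_roots' p

section AnalyticOrder

open Polynomial

variable {𝕜 𝕜' : Type*} [NontriviallyNormedField 𝕜] [NontriviallyNormedField 𝕜']
  [NormedAlgebra 𝕜 𝕜']

theorem analyticOrderAt_polynomial_eval_comp {φ : 𝕜 → 𝕜'} {t : 𝕜} (hφ : AnalyticAt 𝕜 φ t)
    (hφ' : deriv φ t ≠ 0) {Q : 𝕜'[X]} (hQ : Q ≠ 0) :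
    analyticOrderAt (fun s => Q.eval (φ s)) t = Q.rootMultiplicity (φ t) := by
  have hevalφ (P : 𝕜'[X]) : AnalyticAt 𝕜 (fun s => P.eval (φ s)) t := by
    simpa using hφ.aeval_polynomial P
  obtain ⟨R, hQR, hR⟩ := Q.exists_eq_pow_rootMultiplicity_mul_and_not_dvd hQ (φ t)
  set μ := Q.rootMultiplicity (φ t)
  obtain ⟨ψ, hψ, hψt, hφψ⟩ := (AnalyticAt.analyticOrderAt_eq_natCast (by fun_prop)).mp
    (hφ.analyticOrderAt_sub_eq_one_of_deriv_ne_zero hφ')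
  rw [(hevalφ Q).analyticOrderAt_eq_natCast]
  refine ⟨fun s => ψ s ^ μ * R.eval (φ s), (hψ.pow _).mul (hevalφ R), ?_, ?_⟩
  · simpa [hψt, dvd_iff_isRoot] using hR
  · filter_upwards [hφψ] with s hs
    rw [hQR, eval_mul, eval_pow, eval_sub, eval_X, eval_C, hs, pow_one, _root_.smul_pow,
      smul_mul_assoc]

theorem le_rootMultiplicity_of_iteratedDeriv_eq_zero [CharZero 𝕜] [CompleteSpace 𝕜]
    {f : 𝕜 → 𝕜} {u φ : 𝕜 → 𝕜'} {Q : 𝕜'[X]} {t : 𝕜} {m : ℕ}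
    (hf : AnalyticAt 𝕜 f t) (hu : AnalyticAt 𝕜 u t) (hut : u t ≠ 0)
    (hφ : AnalyticAt 𝕜 φ t) (hφ' : deriv φ t ≠ 0) (hQ : Q ≠ 0)
    (hQφ : ∀ s, Q.eval (φ s) = f s • u s) (hvan : ∀ r < m, iteratedDeriv r f t = 0) :
    m ≤ Q.rootMultiplicity (φ t) := by
  have horder : analyticOrderAt (fun s => Q.eval (φ s)) t = analyticOrderAt f t := by
    rw [funext hQφ, show (fun s => f s • u s) = f • u from rfl, analyticOrderAt_smul hf hu,
      hu.analyticOrderAt_eq_zero.mpr hut, add_zero]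
  have hm : (m : ℕ∞) ≤ analyticOrderAt f t :=
    (natCast_le_analyticOrderAt_iff_iteratedDeriv_eq_zero hf).mpr hvan
  rw [← horder, analyticOrderAt_polynomial_eval_comp hφ hφ' hQ] at hm
  exact_mod_cast hm

end AnalyticOrder

section ComplexExp

open Complex

theorem analyticAt_cexp_mul_ofReal (c : ℂ) (x : ℝ) :
    AnalyticAt ℝ (fun s : ℝ => cexp (c * s)) x :=
  (analyticAt_cexp.restrictScalars (𝕜 := ℝ)).comp (analyticAt_const.mul (ofRealCLM.analyticAt x))

theorem deriv_cexp_mul_ofReal_ne_zero {c : ℂ} (hc : c ≠ 0) (x : ℝ) :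
    deriv (fun s : ℝ => cexp (c * s)) x ≠ 0 := by
  have hderiv : HasDerivAt (fun s : ℝ => cexp (c * s)) (c * cexp (c * x)) x := by
    simpa [mul_comm] using ((hasDerivAt_id (x : ℂ)).const_mul c).cexp.comp_ofReal
  rw [hderiv.deriv]
  exact mul_ne_zero hc (Complex.exp_ne_zero _)

theorem eq_of_cexp_two_mul_I_eq {x y : ℝ} (hx : x ∈ Set.Ico 0 (2 * π))
    (hy : y ∈ Set.Ico 0 (2 * π)) (hxy : ¬ ∃ z : ℤ, x - y - π = 2 * π * z)
    (h : cexp (2 * I * x) = cexp (2 * I * y)) : x = y := by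
  have htwice : (2 : ℕ) • (x : Angle) = (2 : ℕ) • (y : Angle) := by
    obtain ⟨n, hn⟩ := Circle.exp_eq_exp.mp
      (Subtype.ext (by simpa [mul_comm, mul_left_comm] using h) :
        Circle.exp (2 * x) = Circle.exp (2 * y))
    rw [← Angle.coe_nsmul, ← Angle.coe_nsmul, Angle.angle_eq_iff_two_pi_dvd_sub]
    exact ⟨n, by push_cast [nsmul_eq_mul]; linarith⟩
  rcases Angle.two_nsmul_eq_iff.mp htwice with hsame | hantipodal
  · have : Fact (0 < 2 * π) := ⟨two_pi_pos⟩
    rwa [← AddCircle.coe_eq_coe_iff_of_mem_Ico (by rwa [zero_add]) (by rwa [zero_add])]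
  · rw [← Angle.coe_add, Angle.angle_eq_iff_two_pi_dvd_sub, ← sub_sub] at hantipodal
    exact absurd hantipodal hxy

end ComplexExp

section RakedPoly

open Polynomial Complex

noncomputable def rakedTrigPoly (k : ℕ) (a b : ℕ → ℝ) (s : ℝ) : ℝ :=
  ∑ j ∈ range k,
    (a j * Real.cos ((2 * (j : ℝ) + 1) * s) + b j * Real.sin ((2 * (j : ℝ) + 1) * s))

noncomputable def rakedPoly (k : ℕ) (a b : ℕ → ℝ) : ℂ[X] :=
  ∑ j ∈ range k,
    (C ((a j - b j * I) / 2) * X ^ (k + j) + C ((a j + b j * I) / 2) * X ^ (k - 1 - j))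

variable (k : ℕ) (a b : ℕ → ℝ)

theorem natDegree_rakedPoly_le : (rakedPoly k a b).natDegree ≤ 2 * k - 1 := by
  refine natDegree_sum_le_of_forall_le _ _ fun j hj => ?_
  have hj : j < k := mem_range.mp hj
  refine natDegree_add_le_of_degree_le ?_ ?_ <;>
    exact (natDegree_C_mul_le _ _).trans (by rw [natDegree_X_pow]; omega)

theorem rakedPoly_eval_cexp (s : ℝ) :
    (rakedPoly k a b).eval (cexp (2 * I * s)) =
      rakedTrigPoly k a b s • cexp ((2 * k - 1) * I * s) := by
  simp only [rakedPoly, rakedTrigPoly, eval_finsetSum, Complex.real_smul, ofReal_sum, sum_mul]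
  refine sum_congr rfl fun j hj => ?_
  have hj : j < k := mem_range.mp hj
  have hexp_plus : cexp (2 * I * s) ^ (k + j) =
      cexp ((2 * k - 1) * I * s) * cexp ((2 * j + 1) * s * I) := by
    rw [← Complex.exp_nat_mul, ← Complex.exp_add]
    push_cast
    ring_nf
  have hexp_minus : cexp (2 * I * s) ^ (k - 1 - j) =
      cexp ((2 * k - 1) * I * s) * cexp (-((2 * j + 1) * s) * I) := by
    rw [← Complex.exp_nat_mul, ← Complex.exp_add, Nat.cast_sub (by omega), Nat.cast_sub (by omega)]
    push_cast
    ring_nf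
  simp only [eval_add, eval_mul, eval_C, eval_pow, eval_X, hexp_plus, hexp_minus]
  push_cast
  rw [Complex.cos, Complex.sin]
  ring

theorem rakedPoly_ne_zero (h : ∃ s, rakedTrigPoly k a b s ≠ 0) : rakedPoly k a b ≠ 0 := by
  obtain ⟨s, hs⟩ := h
  intro h0
  have hzero := rakedPoly_eval_cexp k a b s
  rw [h0, eval_zero, eq_comm, smul_eq_zero] at hzero
  exact hzero.elim hs (Complex.exp_ne_zero _)

theorem analyticAt_rakedTrigPoly (s : ℝ) : AnalyticAt ℝ (rakedTrigPoly k a b) s := by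
  unfold rakedTrigPoly
  fun_prop

end RakedPoly

open Complex in
theorem raked_zero_constant_roots_le_general (k n : ℕ)
    (a b : ℕ → ℝ) (f : ℝ → ℝ)
    (hf : ∀ t : ℝ, f t = ∑ j ∈ Finset.range k,
        (a j * Real.cos ((2 * (j : ℝ) + 1) * t) + b j * Real.sin ((2 * (j : ℝ) + 1) * t)))
    (hne : ∃ t : ℝ, f t ≠ 0)
    (t : Fin n → ℝ) (ht : ∀ i, t i ∈ Set.Ico (0:ℝ) (2 * Real.pi))
    (htinj : Function.Injective t)
    (hanti : ∀ i j, ¬ ∃ z : ℤ, t i - t j - Real.pi = 2 * Real.pi * (z : ℝ))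
    (m : Fin n → ℕ)
    (hroot : ∀ i, (∀ r < m i, iteratedDeriv r f (t i) = 0) ∧
      iteratedDeriv (m i) f (t i) ≠ 0) :
    ∑ i, m i ≤ 2 * k - 1 := by
  obtain rfl : f = rakedTrigPoly k a b := funext hf
  have hw : Function.Injective fun i => cexp (2 * I * t i) := fun i j h =>
    htinj (eq_of_cexp_two_mul_I_eq (ht i) (ht j) (hanti i j) h)
  have hmult (i : Fin n) : m i ≤ (rakedPoly k a b).rootMultiplicity (cexp (2 * I * t i)) :=
    le_rootMultiplicity_of_iteratedDeriv_eq_zero (t := t i)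
      (φ := fun s : ℝ => cexp (2 * I * s)) (u := fun s : ℝ => cexp ((2 * k - 1) * I * s))
      (analyticAt_rakedTrigPoly k a b _) (analyticAt_cexp_mul_ofReal _ _) (Complex.exp_ne_zero _)
      (analyticAt_cexp_mul_ofReal _ _) (deriv_cexp_mul_ofReal_ne_zero (by simp) _)
      (rakedPoly_ne_zero k a b hne) (rakedPoly_eval_cexp k a b) (hroot i).1
  calc ∑ i, m i ≤ ∑ i, (rakedPoly k a b).rootMultiplicity (cexp (2 * I * t i)) :=
        sum_le_sum fun i _ => hmult i
    _ = ∑ x ∈ univ.map ⟨_, hw⟩, (rakedPoly k a b).rootMultiplicity x :=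
        (sum_map univ ⟨_, hw⟩ (rakedPoly k a b).rootMultiplicity).symm
    _ ≤ (rakedPoly k a b).natDegree := (rakedPoly k a b).sum_rootMultiplicity_le_natDegree _
    _ ≤ 2 * k - 1 := natDegree_rakedPoly_le k a b

theorem raked_zero_constant_roots_le (k n : ℕ) (hk : 1 ≤ k)
    (a b : ℕ → ℝ) (f : ℝ → ℝ)
    (hf : ∀ t : ℝ, f t = ∑ j ∈ Finset.range k,
        (a j * Real.cos ((2 * (j : ℝ) + 1) * t) + b j * Real.sin ((2 * (j : ℝ) + 1) * t)))
    (hne : ∃ t : ℝ, f t ≠ 0)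
    (t : Fin n → ℝ) (ht : ∀ i, t i ∈ Set.Ico (0:ℝ) (2 * Real.pi))
    (htinj : Function.Injective t)
    (hanti : ∀ i j, ¬ ∃ z : ℤ, t i - t j - Real.pi = 2 * Real.pi * (z : ℝ))
    (m : Fin n → ℕ) (hm : ∀ i, 1 ≤ m i)
    (hroot : ∀ i, (∀ r < m i, iteratedDeriv r f (t i) = 0) ∧
      iteratedDeriv (m i) f (t i) ≠ 0) :
    ∑ i, m i ≤ 2 * k - 1 :=
  raked_zero_constant_roots_le_general k n a b f hf hne t ht htinj hanti m hroot
end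

section
/- Let f be a raked trigonometric polynomial of degree at most 2k-1, not identically zero, and let t_1,...,t_n be distinct roots of f with multiplicities m_1,...,m_n, all lying in an open semicircle of R/2πZ. Then m_1 + ... + m_n ≤ 2k. -/
/-!
On the semicircle `(α, α + π)`, with midpoint `β`, the derivative of a raked trigonometric
polynomial `f` of degree at most `2k - 1` is a sum of odd harmonics, hence homogeneous of degree
`2k - 1` in `(cos, sin)`; so `f' x = cos (x - β) ^ (2k - 1) * P (tan (x - β))` for a real
polynomial `P` of degree `< 2k`. As `tan (· - β)` is an analytic chart of the semicircle, a root
of `f` of multiplicity `m` is a root of `P` of multiplicity `m - 1`, and by Rolle's theorem `P` has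
a further root strictly between any two consecutive roots of `f`. Counting the roots of `P` gives
`∑ (mᵢ - 1) + (n - 1) ≤ deg P ≤ 2k - 1`.
-/

open Real Finset Polynomial Filter Topology

theorem Polynomial.analyticOrderAt_eval {𝕜 : Type*} [NontriviallyNormedField 𝕜] {P : 𝕜[X]}
    (hP : P ≠ 0) (ξ : 𝕜) :
    analyticOrderAt (fun x => P.eval x) ξ = P.rootMultiplicity ξ := by
  rw [(AnalyticOnNhd.eval_polynomial P ξ trivial).analyticOrderAt_eq_natCast]
  refine ⟨fun x => (P /ₘ (X - C ξ) ^ P.rootMultiplicity ξ).eval x,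
    AnalyticOnNhd.eval_polynomial _ ξ trivial, eval_divByMonic_pow_rootMultiplicity_ne_zero ξ hP,
    .of_forall fun x => ?_⟩
  conv_lhs => rw [← pow_mul_divByMonic_rootMultiplicity_eq P ξ]
  simp

theorem Polynomial.sum_rootMultiplicity_add_card_roots_sdiff_le {R : Type*} [CommRing R]
    [IsDomain R] [DecidableEq R] (P : R[X]) (S : Finset R) :
    ∑ x ∈ S, P.rootMultiplicity x + (P.roots.toFinset \ S).card ≤ P.natDegree := by
  have hcard :
      (P.roots.toFinset \ S).card ≤ ∑ x ∈ P.roots.toFinset \ S, P.rootMultiplicity x := by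
    rw [card_eq_sum_ones]
    refine sum_le_sum fun x hx => ?_
    rw [← count_roots, Nat.one_le_iff_ne_zero, Multiset.count_ne_zero, ← Multiset.mem_toFinset]
    exact (mem_sdiff.mp hx).1
  calc ∑ x ∈ S, P.rootMultiplicity x + (P.roots.toFinset \ S).card
      ≤ ∑ x ∈ S ∪ P.roots.toFinset, P.roots.count x := by
        rw [← union_sdiff_self_eq_union, sum_union disjoint_sdiff]
        simp only [count_roots]
        omega
    _ = Multiset.card P.roots :=
        Multiset.sum_count_eq_card fun x hx => mem_union_right _ (Multiset.mem_toFinset.mpr hx)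
    _ ≤ P.natDegree := card_roots' P

theorem AnalyticAt.analyticOrderAt_eq_deriv_add_one {𝕜 E : Type*} [NontriviallyNormedField 𝕜]
    [CharZero 𝕜] [NormedAddCommGroup E] [NormedSpace 𝕜 E] [CompleteSpace E] {f : 𝕜 → E}
    {x : 𝕜} (hf : AnalyticAt 𝕜 f x) (hx : f x = 0) :
    analyticOrderAt f x = analyticOrderAt (deriv f) x + 1 := by
  simpa [hx] using hf.analyticOrderAt_deriv_add_one.symm

theorem sum_analyticOrderAt_le_natDegree_add_one {f φ : ℝ → ℝ} {U : Set ℝ} [U.OrdConnected]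
    {P : ℝ[X]} (hf : ∀ x ∈ U, AnalyticAt ℝ f x) (hφ : StrictMonoOn φ U)
    (hfP : ∀ x ∈ U, analyticOrderAt (deriv f) x = P.rootMultiplicity (φ x))
    {s : Finset ℝ} (hsU : ↑s ⊆ U) (hs : ∀ x ∈ s, f x = 0) :
    ∑ x ∈ s, analyticOrderAt f x ≤ P.natDegree + 1 := by
  classical
  have hinj : Set.InjOn φ s := hφ.injOn.mono hsU
  have hinterleave : (s.image φ).card ≤ (P.roots.toFinset \ s.image φ).card + 1 := by
    refine card_le_sdiff_of_interleaved fun ξ₁ hξ₁ ξ₂ hξ₂ hlt _ => ?_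
    obtain ⟨x₁, hx₁, rfl⟩ := mem_image.mp hξ₁
    obtain ⟨x₂, hx₂, rfl⟩ := mem_image.mp hξ₂
    have hx₁₂ : x₁ < x₂ := (hφ.lt_iff_lt (hsU hx₁) (hsU hx₂)).mp hlt
    have hIcc : Set.Icc x₁ x₂ ⊆ U := Set.Icc_subset U (hsU hx₁) (hsU hx₂)
    obtain ⟨z, hz, hz0⟩ := exists_deriv_eq_zero hx₁₂
      (fun y hy => (hf y (hIcc hy)).continuousAt.continuousWithinAt)
      ((hs x₁ hx₁).trans (hs x₂ hx₂).symm)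
    have hzU : z ∈ U := hIcc (Set.Ioo_subset_Icc_self hz)
    have hroot : 0 < P.rootMultiplicity (φ z) := by
      rw [Nat.pos_iff_ne_zero, ← Nat.cast_ne_zero (R := ℕ∞), ← hfP z hzU,
        analyticOrderAt_ne_zero]
      exact ⟨(hf z hzU).deriv, hz0⟩
    obtain ⟨hP, hPz⟩ := rootMultiplicity_pos'.mp hroot
    exact ⟨φ z, Multiset.mem_toFinset.mpr ((mem_roots hP).mpr hPz),
      hφ (hsU hx₁) hzU hz.1, hφ hzU (hsU hx₂) hz.2⟩
  have hord : ∀ x ∈ s, analyticOrderAt f x = ((P.rootMultiplicity (φ x) + 1 : ℕ) : ℕ∞) :=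
    fun x hx => by
      rw [(hf x (hsU hx)).analyticOrderAt_eq_deriv_add_one (hs x hx), hfP x (hsU hx), Nat.cast_succ]
  have key : ∑ x ∈ s, (P.rootMultiplicity (φ x) + 1) ≤ P.natDegree + 1 := by
    have := P.sum_rootMultiplicity_add_card_roots_sdiff_le (s.image φ)
    rw [sum_image hinj] at this
    rw [card_image_of_injOn hinj] at hinterleave
    rw [sum_add_distrib, sum_const, smul_eq_mul, mul_one]
    omega
  rw [sum_congr rfl hord]
  exact_mod_cast key

theorem analyticOrderAt_cos_pow_mul_eval_tan {g : ℝ → ℝ} {P : ℝ[X]} (hP : P ≠ 0) {K : ℕ}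
    {β x : ℝ} (hx : cos (x - β) ≠ 0)
    (hg : g =ᶠ[𝓝 x] fun y => cos (y - β) ^ K * P.eval (tan (y - β))) :
    analyticOrderAt g x = P.rootMultiplicity (tan (x - β)) := by
  have htan : HasDerivAt (fun y => tan (y - β)) (1 / cos (x - β) ^ 2) x :=
    (hasDerivAt_tan hx).comp_sub_const x β
  have htan_an : AnalyticAt ℝ (fun y => tan (y - β)) x := by
    have : (fun y => tan (y - β)) = fun y => sin (y - β) / cos (y - β) :=
      funext fun y => tan_eq_sin_div_cos _
    rw [this]
    fun_prop (disch := exact hx)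
  have hcos_an : AnalyticAt ℝ (fun y => cos (y - β) ^ K) x := by fun_prop
  have hcos_ord : analyticOrderAt (fun y => cos (y - β) ^ K) x = 0 :=
    hcos_an.analyticOrderAt_eq_zero.mpr (pow_ne_zero _ hx)
  rw [analyticOrderAt_congr hg, show (fun y => cos (y - β) ^ K * P.eval (tan (y - β))) =
      (fun y => cos (y - β) ^ K) * ((fun ξ => P.eval ξ) ∘ fun y => tan (y - β)) from rfl,
    analyticOrderAt_mul hcos_an ((AnalyticOnNhd.eval_polynomial P _ trivial).comp htan_an),
    hcos_ord, zero_add, analyticOrderAt_comp_of_deriv_ne_zero htan_an (by simp [htan.deriv, hx]),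
    P.analyticOrderAt_eval hP]

noncomputable def multipleAngleTanPoly : ℕ → ℝ[X] × ℝ[X]
  | 0 => (1, 0)
  | n + 1 => ((multipleAngleTanPoly n).1 - X * (multipleAngleTanPoly n).2,
      (multipleAngleTanPoly n).2 + X * (multipleAngleTanPoly n).1)

theorem cos_sin_nat_mul_eq_cos_pow_mul_eval_tan (n : ℕ) {x : ℝ} (hx : cos x ≠ 0) :
    cos (n * x) = cos x ^ n * (multipleAngleTanPoly n).1.eval (tan x) ∧
      sin (n * x) = cos x ^ n * (multipleAngleTanPoly n).2.eval (tan x) := by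
  induction n with
  | zero => simp [multipleAngleTanPoly]
  | succ n ih =>
    have hsin : sin x = cos x * tan x := by rw [mul_comm, tan_mul_cos hx]
    simp only [Nat.cast_succ, add_mul, one_mul, cos_add, sin_add, ih.1, ih.2, hsin,
      multipleAngleTanPoly, eval_sub, eval_add, eval_mul, eval_X]
    constructor <;> ring

theorem natDegree_multipleAngleTanPoly_le (n : ℕ) :
    (multipleAngleTanPoly n).1.natDegree ≤ n ∧ (multipleAngleTanPoly n).2.natDegree ≤ n := by
  induction n with
  | zero => simp [multipleAngleTanPoly]
  | succ n ih =>
    have hX : ∀ p : ℝ[X], p.natDegree ≤ n → (X * p).natDegree ≤ n + 1 := fun p hp => by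
      have := natDegree_mul_le (p := (X : ℝ[X])) (q := p)
      rw [natDegree_X] at this
      omega
    exact ⟨(natDegree_sub_le _ _).trans (max_le (ih.1.trans n.le_succ) (hX _ ih.2)),
      natDegree_add_le_of_degree_le (ih.2.trans n.le_succ) (hX _ ih.1)⟩

theorem exists_harmonic_eq_cos_pow_mul_eval_tan (n : ℕ) (a b : ℝ) :
    ∃ Q : ℝ[X], Q.natDegree ≤ n ∧
      ∀ x, cos x ≠ 0 → a * cos (n * x) + b * sin (n * x) = cos x ^ n * Q.eval (tan x) := by
  obtain ⟨hdeg₁, hdeg₂⟩ := natDegree_multipleAngleTanPoly_le n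
  refine ⟨C a * (multipleAngleTanPoly n).1 + C b * (multipleAngleTanPoly n).2,
    natDegree_add_le_of_degree_le ((natDegree_C_mul_le _ _).trans hdeg₁)
      ((natDegree_C_mul_le _ _).trans hdeg₂), fun x hx => ?_⟩
  obtain ⟨hcos, hsin⟩ := cos_sin_nat_mul_eq_cos_pow_mul_eval_tan n hx
  rw [hcos, hsin, eval_add, eval_mul, eval_mul, eval_C, eval_C]
  ring

noncomputable def oddTrigSum (k : ℕ) (a b : ℕ → ℝ) (x : ℝ) : ℝ :=
  ∑ j ∈ range k, (a j * cos ((2 * (j : ℝ) + 1) * x) + b j * sin ((2 * (j : ℝ) + 1) * x))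

theorem hasDerivAt_oddTrigSum (k : ℕ) (a b : ℕ → ℝ) (x : ℝ) :
    HasDerivAt (oddTrigSum k a b)
      (oddTrigSum k (fun j => (2 * j + 1) * b j) (fun j => -((2 * j + 1) * a j)) x) x := by
  unfold oddTrigSum
  refine HasDerivAt.fun_sum fun j _ => ?_
  have hlin : HasDerivAt (fun y => (2 * (j : ℝ) + 1) * y) (2 * j + 1) x := by
    simpa using (hasDerivAt_id x).const_mul (2 * (j : ℝ) + 1)
  convert (hlin.cos.const_mul (a j)).fun_add (hlin.sin.const_mul (b j)) using 1
  ring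

theorem analyticAt_oddTrigSum (k : ℕ) (a b : ℕ → ℝ) (x : ℝ) :
    AnalyticAt ℝ (oddTrigSum k a b) x := by
  unfold oddTrigSum
  fun_prop

theorem oddTrigSum_add (k : ℕ) (a b : ℕ → ℝ) (x β : ℝ) :
    oddTrigSum k a b (x + β) = oddTrigSum k
      (fun j => a j * cos ((2 * j + 1) * β) + b j * sin ((2 * j + 1) * β))
      (fun j => b j * cos ((2 * j + 1) * β) - a j * sin ((2 * j + 1) * β)) x := by
  unfold oddTrigSum
  refine sum_congr rfl fun j _ => ?_
  rw [mul_add, cos_add, sin_add]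
  ring

theorem exists_oddTrigSum_eq_cos_pow_mul_eval_tan (k : ℕ) (a b : ℕ → ℝ) :
    ∃ P : ℝ[X], P.degree < 2 * k ∧
      ∀ x, cos x ≠ 0 → oddTrigSum k a b x = cos x ^ (2 * k - 1) * P.eval (tan x) := by
  choose Q hQdeg hQ using fun j => exists_harmonic_eq_cos_pow_mul_eval_tan (2 * j + 1) (a j) (b j)
  refine ⟨∑ j ∈ range k, (1 + X ^ 2) ^ (k - 1 - j) * Q j, ?_, fun x hx => ?_⟩
  · suffices h : _ ∈ degreeLT ℝ (2 * k) by exact_mod_cast mem_degreeLT.mp h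
    refine Submodule.sum_mem _ fun j hj => mem_degreeLT.mpr ?_
    have hj := mem_range.mp hj
    have h1 : ((1 + X ^ 2 : ℝ[X]) ^ (k - 1 - j)).natDegree ≤ (k - 1 - j) * 2 :=
      natDegree_pow_le_of_le _ (natDegree_add_le_of_degree_le (by simp) (by simp))
    have h2 := hQdeg j
    exact degree_le_natDegree.trans_lt (by exact_mod_cast natDegree_mul_le.trans_lt (by omega))
  · simp only [oddTrigSum, eval_finsetSum, mul_sum, eval_mul, eval_pow, eval_add, eval_one, eval_X]
    refine sum_congr rfl fun j hj => ?_
    have hj := mem_range.mp hj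
    -- `cos x ^ 2 * (1 + tan x ^ 2) = 1` raises the degree from `2 * j + 1` to `2 * k - 1`.
    have hpow : cos x ^ (2 * k - 1) * (1 + tan x ^ 2) ^ (k - 1 - j) = cos x ^ (2 * j + 1) := by
      rw [← inv_inv (1 + tan x ^ 2), inv_one_add_tan_sq hx, inv_pow, ← pow_mul,
        show 2 * k - 1 = 2 * j + 1 + 2 * (k - 1 - j) by omega, pow_add]
      field_simp
    have := hQ j x hx
    push_cast at this
    rw [this, ← mul_assoc, hpow]

theorem exists_deriv_eventuallyEq_cos_pow_mul_eval_tan (k : ℕ) (c : ℝ) (a b : ℕ → ℝ)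
    (β : ℝ) :
    ∃ P : ℝ[X], P.degree < 2 * k ∧ ∀ x, cos (x - β) ≠ 0 →
      deriv (fun y => c + oddTrigSum k a b y) =ᶠ[𝓝 x]
        fun y => cos (y - β) ^ (2 * k - 1) * P.eval (tan (y - β)) := by
  obtain ⟨P, hPdeg, hP⟩ := exists_oddTrigSum_eq_cos_pow_mul_eval_tan k _ _
  refine ⟨P, hPdeg, fun x hx => ?_⟩
  filter_upwards [(continuous_cos.comp (continuous_sub_right β)).continuousAt.eventually_ne hx]
    with y hy
  rw [((hasDerivAt_oddTrigSum k a b y).const_add c).deriv, ← sub_add_cancel y β, oddTrigSum_add,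
    sub_add_cancel]
  exact hP _ hy

theorem sub_add_pi_div_two_mem_Ioo {α x : ℝ} (hx : x ∈ Set.Ioo α (α + π)) :
    x - (α + π / 2) ∈ Set.Ioo (-(π / 2)) (π / 2) :=
  ⟨by linarith [hx.1], by linarith [hx.2]⟩

theorem raked_semicircle_roots_le_general (k n : ℕ)
    (c : ℝ) (a b : ℕ → ℝ) (f : ℝ → ℝ)
    (hf : ∀ t : ℝ, f t = c + ∑ j ∈ Finset.range k,
        (a j * Real.cos ((2 * (j : ℝ) + 1) * t) + b j * Real.sin ((2 * (j : ℝ) + 1) * t)))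
    (α : ℝ) (t : Fin n → ℝ) (ht : ∀ i, t i ∈ Set.Ioo α (α + Real.pi))
    (htinj : Function.Injective t)
    (m : Fin n → ℕ) (hm : ∀ i, 1 ≤ m i)
    (hroot : ∀ i, (∀ r < m i, iteratedDeriv r f (t i) = 0) ∧
      iteratedDeriv (m i) f (t i) ≠ 0) :
    ∑ i, m i ≤ 2 * k := by
  rcases isEmpty_or_nonempty (Fin n) with _ | ⟨⟨i₀⟩⟩
  · simp
  have hf_eq : f = fun x => c + oddTrigSum k a b x := funext hf
  have hf_an : ∀ x, AnalyticAt ℝ f x :=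
    hf_eq ▸ fun x => analyticAt_const.add (analyticAt_oddTrigSum k a b x)
  have hcos : ∀ x ∈ Set.Ioo α (α + π), cos (x - (α + π / 2)) ≠ 0 :=
    fun x hx => (cos_pos_of_mem_Ioo (sub_add_pi_div_two_mem_Ioo hx)).ne'
  obtain ⟨P, hPdeg, hP⟩ := exists_deriv_eventuallyEq_cos_pow_mul_eval_tan k c a b (α + π / 2)
  rw [← hf_eq] at hP
  have hord : ∀ i, analyticOrderAt f (t i) = m i := fun i =>
    (analyticOrderAt_eq_nat_iff_iteratedDeriv_eq_zero (hf_an _)).mpr (hroot i)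
  have hzero : ∀ i, f (t i) = 0 := fun i => by simpa using (hroot i).1 0 (hm i)
  have hP0 : P ≠ 0 := by
    rintro rfl
    have htop : analyticOrderAt (deriv f) (t i₀) = ⊤ :=
      analyticOrderAt_eq_top.mpr ((hP _ (hcos _ (ht i₀))).mono fun y hy => by simp [hy])
    have := (hf_an _).analyticOrderAt_eq_deriv_add_one (hzero i₀)
    rw [hord, htop, top_add] at this
    exact ENat.natCast_ne_top _ this
  have hsum := sum_analyticOrderAt_le_natDegree_add_one (fun x _ => hf_an x)
    (strictMonoOn_tan.comp (fun x _ y _ hxy => sub_lt_sub_right hxy _)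
      fun x hx => sub_add_pi_div_two_mem_Ioo hx)
    (fun x hx => analyticOrderAt_cos_pow_mul_eval_tan hP0 (hcos x hx) (hP x (hcos x hx)))
    (s := univ.image t) (by simpa [Set.subset_def] using ht) (by simpa using hzero)
  rw [sum_image htinj.injOn] at hsum
  simp only [hord] at hsum
  have hdeg : P.natDegree < 2 * k :=
    (natDegree_lt_iff_degree_lt hP0).mpr (by exact_mod_cast hPdeg)
  have : ∑ i, m i ≤ P.natDegree + 1 := by exact_mod_cast hsum
  omega

theorem raked_semicircle_roots_le (k n : ℕ) (hk : 1 ≤ k)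
    (c : ℝ) (a b : ℕ → ℝ) (f : ℝ → ℝ)
    (hf : ∀ t : ℝ, f t = c + ∑ j ∈ Finset.range k,
        (a j * Real.cos ((2 * (j : ℝ) + 1) * t) + b j * Real.sin ((2 * (j : ℝ) + 1) * t)))
    (hne : ∃ t : ℝ, f t ≠ 0)
    (α : ℝ) (t : Fin n → ℝ) (ht : ∀ i, t i ∈ Set.Ioo α (α + Real.pi))
    (htinj : Function.Injective t)
    (m : Fin n → ℕ) (hm : ∀ i, 1 ≤ m i)
    (hroot : ∀ i, (∀ r < m i, iteratedDeriv r f (t i) = 0) ∧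
      iteratedDeriv (m i) f (t i) ≠ 0) :
    ∑ i, m i ≤ 2 * k :=
  raked_semicircle_roots_le_general k n c a b f hf α t ht htinj m hm hroot
end

section
/- Let t_1,...,t_n be distinct points of the circle lying in an open semicircle and m_1,...,m_n positive integers with Σ m_i = 2k. Then the 2k vectors U(t_i) - U(t_n) for i = 1,...,n-1, the derivatives (d^j/dt^j)U(t)|_{t=t_i} for j = 1,...,m_i - 1 (when m_i > 1) for each i, and (d^{m_1}/dt^{m_1})U(t)|_{t=t_1}, are linearly independent in R^{2k}. -/
/-!
If `ξ` is orthogonal to all `2k` vectors, the trigonometric polynomial `f(s) = ⟨U(s), ξ⟩`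
(degree `2k - 1`, odd frequencies only) takes one value at every `tᵢ`, and counting the vanishing
derivatives, `f - f(tₙ)` has `∑ mᵢ + 1 = 2k + 1` zeros with multiplicity in the open semicircle
`(α, α + π)`, the extra one coming from the `m₁`-th derivative at `t₁`. By Rolle's theorem `f'`
has `2k` zeros there, and since `f'(s + π) = -f'(s)` it has `4k` zeros in a full period. But
`z^(2k-1) f'(s)` with `z = e^{is}` is a polynomial of degree `≤ 4k - 2` in `z`, so `f' = 0`. The
Fourier coefficients of `f'` are those of `f` times nonzero frequencies, so `ξ = 0`; as the family
has `2k = dim ℝ^{2k}` members, it is linearly independent.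
-/

open Real Finset Complex

def VanishesToOrder {F : Type*} [NormedAddCommGroup F] [NormedSpace ℝ F] (f : ℝ → F) (x : ℝ)
    (ν : ℕ) : Prop :=
  ∀ j < ν, iteratedDeriv j f x = 0

theorem VanishesToOrder.mono {F : Type*} [NormedAddCommGroup F] [NormedSpace ℝ F] {f : ℝ → F}
    {x : ℝ} {μ ν : ℕ} (h : VanishesToOrder f x ν) (hμν : μ ≤ ν) : VanishesToOrder f x μ :=
  fun j hj => h j (hj.trans_le hμν)

theorem ContinuousLinearMap.iteratedDeriv_comp_left {F G : Type*} [NormedAddCommGroup F]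
    [NormedSpace ℝ F] [NormedAddCommGroup G] [NormedSpace ℝ G] (g : F →L[ℝ] G) {f : ℝ → F}
    (hf : ContDiff ℝ ⊤ f) (r : ℕ) (x : ℝ) :
    iteratedDeriv r (g ∘ f) x = g (iteratedDeriv r f x) := by
  simp [iteratedDeriv_eq_iteratedFDeriv, g.iteratedFDeriv_comp_left hf.contDiffAt
    (i := r) (by exact_mod_cast le_top)]

theorem iteratedDeriv_sum_mul_cexp {ι : Type*} (s : Finset ι) (c w : ι → ℂ) (r : ℕ) :
    iteratedDeriv r (fun x : ℝ => ∑ p ∈ s, c p * cexp (w p * x)) =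
      fun x : ℝ => ∑ p ∈ s, c p * w p ^ r * cexp (w p * x) := by
  induction r with
  | zero => simp
  | succ r ih =>
    funext x
    rw [iteratedDeriv_succ, ih]
    have hp : ∀ p, HasDerivAt (fun y : ℝ => c p * w p ^ r * cexp (w p * y))
        (c p * w p ^ (r + 1) * cexp (w p * x)) x := fun p =>
      ((((hasDerivAt_id x).ofReal_comp.const_mul (w p)).cexp).const_mul
        (c p * w p ^ r)).congr_deriv (by simp only [id, ofReal_one]; ring)
    exact (HasDerivAt.fun_sum fun p _ => hp p).deriv

section EulerOperator

open Polynomial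

noncomputable def eulerOperator (R : Type*) [CommSemiring R] : R[X] →ₗ[R] R[X] :=
  LinearMap.mulLeft R X ∘ₗ derivative

section

variable {R : Type*} [CommRing R]

theorem eulerOperator_apply (P : R[X]) : eulerOperator R P = X * derivative P := rfl

theorem eulerOperator_pow_monomial (r n : ℕ) (a : R) :
    (eulerOperator R ^ r) (monomial n a) = monomial n (a * n ^ r) := by
  induction r with
  | zero => simp
  | succ r ih =>
    rw [pow_succ', Module.End.mul_apply, ih, eulerOperator_apply, derivative_monomial]
    rcases n with _ | n
    · simp
    · rw [X_mul_monomial, Nat.add_sub_cancel, ← C_mul_X_pow_eq_monomial, ← C_mul_X_pow_eq_monomial]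
      simp only [map_mul, map_pow, map_natCast]
      ring

theorem exists_eulerOperator_pow_X_sub_C_pow_mul (z : R) (Q : R[X]) {j m : ℕ} (hjm : j ≤ m) :
    ∃ S : R[X], (eulerOperator R ^ j) ((X - C z) ^ m * Q) = (X - C z) ^ (m - j) * S ∧
      S.eval z = m.descFactorial j * z ^ j * Q.eval z := by
  induction j with
  | zero => exact ⟨Q, by simp, by simp⟩
  | succ j ih =>
    obtain ⟨S, hS, hSz⟩ := ih (by omega)
    obtain ⟨a, ha⟩ : ∃ a, m - j = a + 1 := ⟨m - (j + 1), by omega⟩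
    refine ⟨((a + 1 : ℕ) : R[X]) * X * S + (X - C z) * (X * derivative S), ?_, ?_⟩
    · rw [pow_succ', Module.End.mul_apply, hS, eulerOperator_apply, ha,
        show m - (j + 1) = a by omega]
      simp only [derivative_mul, derivative_pow, derivative_sub, derivative_X, derivative_C,
        C_eq_natCast]
      push_cast
      ring
    · simp only [eval_add, eval_mul, eval_natCast, eval_X, eval_sub, eval_C, sub_self, zero_mul,
        add_zero, hSz, Nat.descFactorial_succ, ha]
      push_cast
      ring
end

theorem pow_dvd_of_eulerOperator_pow_eval_eq_zero {K : Type*} [Field K] [CharZero K] {z : K}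
    (hz : z ≠ 0) {μ : ℕ} {P : K[X]} (hP : ∀ r < μ, ((eulerOperator K ^ r) P).eval z = 0) :
    (X - C z) ^ μ ∣ P := by
  induction μ with
  | zero => simp
  | succ μ ih =>
    obtain ⟨Q, rfl⟩ := ih fun r hr => hP r (by omega)
    obtain ⟨S, hS, hSz⟩ := exists_eulerOperator_pow_X_sub_C_pow_mul z Q le_rfl (j := μ)
    have hQz : Q.eval z = 0 := by
      have := hP μ (by omega)
      rw [hS, Nat.sub_self, pow_zero, one_mul, hSz, Nat.descFactorial_self] at this
      simpa [Nat.factorial_ne_zero, hz] using this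
    obtain ⟨Q', rfl⟩ := dvd_iff_isRoot.mpr hQz
    exact ⟨Q', by ring⟩

theorem card_le_natDegree_of_pow_dvd {K : Type*} [Field K] [DecidableEq K] {P : K[X]} (hP : P ≠ 0)
    {W : Multiset K} (hW : ∀ z, (X - C z) ^ W.count z ∣ P) : Multiset.card W ≤ P.natDegree := by
  refine le_trans (Multiset.card_le_card ?_) (card_roots' P)
  exact Multiset.le_iff_count.mpr fun z => by
    rw [count_roots, le_rootMultiplicity_iff hP]
    exact hW z

end EulerOperator

theorem sum_mul_add_pow_eq_zero {ι R : Type*} [CommRing R] (s : Finset ι) {c ω : ι → R} {μ : ℕ}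
    (h : ∀ r < μ, ∑ p ∈ s, c p * ω p ^ r = 0) (N : R) {r : ℕ} (hr : r < μ) :
    ∑ p ∈ s, c p * (ω p + N) ^ r = 0 := by
  simp_rw [add_pow, Finset.mul_sum]
  rw [Finset.sum_comm]
  refine Finset.sum_eq_zero fun i hi => ?_
  have hi : i < μ := by have := Finset.mem_range.mp hi; omega
  calc ∑ p ∈ s, c p * (ω p ^ i * N ^ (r - i) * (r.choose i))
      = (∑ p ∈ s, c p * ω p ^ i) * (N ^ (r - i) * r.choose i) := by
        rw [Finset.sum_mul]; exact Finset.sum_congr rfl fun p _ => by ring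
    _ = 0 := by rw [h i hi, zero_mul]

section TrigonometricSums

open Polynomial

variable {ι : Type*} [Fintype ι]

/-- `z ^ N * ∑ p, c p * z ^ ω p`, a polynomial in `z` as long as every `|ω p| ≤ N`. -/
noncomputable def trigSumPolynomial (c : ι → ℂ) (ω : ι → ℤ) (N : ℕ) : ℂ[X] :=
  ∑ p, monomial (ω p + N).toNat (c p)

variable {c : ι → ℂ} {ω : ι → ℤ} {N : ℕ}

theorem natDegree_trigSumPolynomial_le (hωN : ∀ p, (ω p).natAbs ≤ N) :
    (trigSumPolynomial c ω N).natDegree ≤ 2 * N :=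
  natDegree_sum_le_of_forall_le _ _ fun p _ =>
    (natDegree_monomial_le _).trans (by have := hωN p; omega)

theorem eq_zero_of_trigSumPolynomial_eq_zero (hω : Function.Injective ω)
    (hωN : ∀ p, (ω p).natAbs ≤ N) (h : trigSumPolynomial c ω N = 0) : c = 0 := by
  classical
  funext p
  have := congrArg (coeff · (ω p + N).toNat) h
  simp only [trigSumPolynomial, finsetSum_coeff, coeff_monomial, coeff_zero] at this
  rwa [Finset.sum_eq_single p (fun q _ hqp => if_neg fun hq => hqp (hω (by
    have := hωN p; have := hωN q; omega))) (by simp), if_pos rfl] at this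

theorem sum_mul_exp_zpow_mul_pow_eq_zero {x : ℝ} {ν : ℕ}
    (hvan : VanishesToOrder (fun x : ℝ => ∑ p, c p * cexp (I * ω p * x)) x ν) {r : ℕ}
    (hr : r < ν) : ∑ p, c p * cexp (x * I) ^ ω p * (ω p : ℂ) ^ r = 0 := by
  have h := hvan r hr
  rw [iteratedDeriv_sum_mul_cexp Finset.univ c (fun p => I * ω p) r] at h
  have h' : ∑ p, c p * (I * ω p) ^ r * cexp (I * ω p * x) =
      I ^ r * ∑ p, c p * cexp (x * I) ^ ω p * (ω p : ℂ) ^ r := by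
    rw [Finset.mul_sum]
    refine Finset.sum_congr rfl fun p _ => ?_
    rw [← exp_int_mul]
    ring_nf
  exact (mul_eq_zero.mp (h'.symm.trans h)).resolve_left (pow_ne_zero _ I_ne_zero)

theorem pow_dvd_trigSumPolynomial (hωN : ∀ p, (ω p).natAbs ≤ N) {x : ℝ} {ν : ℕ}
    (hvan : VanishesToOrder (fun x : ℝ => ∑ p, c p * cexp (I * ω p * x)) x ν) :
    (X - C (cexp (x * I))) ^ ν ∣ trigSumPolynomial c ω N := by
  set z := cexp (x * I)
  have hz : z ≠ 0 := exp_ne_zero _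
  have hn (p : ι) : ((ω p + N).toNat : ℤ) = ω p + N :=
    Int.toNat_of_nonneg (by have := hωN p; omega)
  refine pow_dvd_of_eulerOperator_pow_eval_eq_zero hz fun r hr => ?_
  simp only [trigSumPolynomial, map_sum, eulerOperator_pow_monomial, eval_finsetSum, eval_monomial]
  calc ∑ p, c p * ((ω p + N).toNat : ℂ) ^ r * z ^ (ω p + N).toNat
      = z ^ N * ∑ p, c p * z ^ ω p * ((ω p : ℂ) + N) ^ r := by
        rw [Finset.mul_sum]
        refine Finset.sum_congr rfl fun p _ => ?_
        have hc : ((ω p + N).toNat : ℂ) = ω p + N := by exact_mod_cast hn p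
        rw [hc, ← zpow_natCast z, hn p, zpow_add₀ hz, zpow_natCast]
        ring
    _ = 0 := by
      rw [sum_mul_add_pow_eq_zero Finset.univ (fun r hr => sum_mul_exp_zpow_mul_pow_eq_zero hvan hr)
        N hr, mul_zero]

theorem sum_mul_cexp_eq_zero_of_card_zeros (hω : Function.Injective ω) {a : ℝ} {Z : Multiset ℝ}
    (hZ : ∀ x ∈ Z, x ∈ Set.Ioo a (a + 2 * π)) (hωN : ∀ p, (ω p).natAbs ≤ N)
    (hN : 2 * N < Multiset.card Z)
    (hvan : ∀ x, VanishesToOrder (fun x : ℝ => ∑ p, c p * cexp (I * ω p * x)) x (Z.count x)) :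
    c = 0 := by
  classical
  refine eq_zero_of_trigSumPolynomial_eq_zero hω hωN (by_contra fun hP => ?_)
  have hinj : Set.InjOn (fun x : ℝ => cexp (x * I)) {x | x ∈ Z} := fun x hx y hy hxy =>
    Circle.exp_injOn_Ioc (a := a) (b := a + 2 * π) (by linarith)
      (Set.Ioo_subset_Ioc_self (hZ x hx)) (Set.Ioo_subset_Ioc_self (hZ y hy))
      (Circle.ext (by simpa only [Circle.coe_exp] using hxy))
  have hW (z : ℂ) : (X - C z) ^ (Z.map fun x : ℝ => cexp (x * I)).count z ∣
      trigSumPolynomial c ω N := by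
    by_cases hz : z ∈ Z.map fun x : ℝ => cexp (x * I)
    · obtain ⟨x, hx, rfl⟩ := Multiset.mem_map.mp hz
      rw [Multiset.count_map_eq_count _ _ hinj _ hx]
      exact pow_dvd_trigSumPolynomial hωN (hvan x)
    · rw [Multiset.count_eq_zero_of_notMem hz, pow_zero]
      exact one_dvd _
  have := card_le_natDegree_of_pow_dvd hP hW
  rw [Multiset.card_map] at this
  linarith [natDegree_trigSumPolynomial_le (c := c) hωN]

theorem sum_mul_cexp_eq_zero_of_card_zeros_of_odd (hω : Function.Injective ω)
    (hodd : ∀ p, Odd (ω p)) {a : ℝ} {Z : Multiset ℝ} (hZ : ∀ x ∈ Z, x ∈ Set.Ioo a (a + π))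
    (hωN : ∀ p, (ω p).natAbs ≤ N) (hN : N < Multiset.card Z)
    (hvan : ∀ x, VanishesToOrder (fun x : ℝ => ∑ p, c p * cexp (I * ω p * x)) x (Z.count x)) :
    c = 0 := by
  set F := fun x : ℝ => ∑ p, c p * cexp (I * ω p * x)
  -- odd frequencies make `F` antiperiodic, so the zeros in `Z` recur in `Z + π`
  have hanti : (fun x => F (x + π)) = fun x => -F x := by
    funext x
    simp only [F, ← Finset.sum_neg_distrib]
    refine Finset.sum_congr rfl fun p _ => ?_
    have : I * ω p * ↑(x + π) = I * ω p * x + ω p * (π * I) := by push_cast; ring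
    rw [this, Complex.exp_add, exp_int_mul, exp_pi_mul_I, (hodd p).neg_one_zpow]
    ring
  have hshift : ∀ x ν, VanishesToOrder F x ν → VanishesToOrder F (x + π) ν := by
    intro x ν h j hj
    have := congrFun (iteratedDeriv_comp_add_const j F π) x
    rw [hanti, iteratedDeriv_fun_neg, h j hj, neg_zero] at this
    exact this.symm
  have hcount : ∀ x, (Z.map (· + π)).count x = Z.count (x - π) := fun x => by
    simpa using Multiset.count_map_eq_count' (· + π) Z (add_left_injective _) (x - π)
  refine sum_mul_cexp_eq_zero_of_card_zeros hω (Z := Z + Z.map (· + π)) (a := a) ?_ hωN ?_ ?_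
  · intro x hx
    rcases Multiset.mem_add.mp hx with hx | hx
    · exact ⟨(hZ x hx).1, by linarith [(hZ x hx).2, Real.pi_pos]⟩
    · obtain ⟨y, hy, rfl⟩ := Multiset.mem_map.mp hx
      exact ⟨by linarith [(hZ y hy).1, Real.pi_pos], by linarith [(hZ y hy).2]⟩
  · rw [Multiset.card_add, Multiset.card_map]
    omega
  · intro x
    rw [Multiset.count_add, hcount]
    by_cases hx : x ∈ Z
    · have : x - π ∉ Z := fun h => by linarith [(hZ _ h).1, (hZ x hx).2]
      rw [Multiset.count_eq_zero_of_notMem this, add_zero]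
      exact hvan x
    · rw [Multiset.count_eq_zero_of_notMem hx, zero_add]
      simpa using hshift _ _ (hvan (x - π))

end TrigonometricSums

theorem exists_finset_deriv_eq_zero_between {f : ℝ → ℝ} (hf : Continuous f) {c : ℝ}
    (s : Finset ℝ) (hs : s.Nonempty) (hfs : ∀ x ∈ s, f x = c) :
    ∃ Y : Finset ℝ, Y.card + 1 = s.card ∧ Disjoint s Y ∧ (∀ y ∈ Y, deriv f y = 0) ∧
      ∀ y ∈ Y, ∃ x ∈ s, ∃ x' ∈ s, x < y ∧ y < x' := by
  induction s using Finset.induction_on_max with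
  | empty => simp at hs
  | insert x s hlt ih =>
    have hx : x ∉ s := fun h => (hlt x h).false
    rcases s.eq_empty_or_nonempty with rfl | hs
    · exact ⟨∅, by simp, by simp, by simp, by simp⟩
    obtain ⟨Y, hcard, hdisj, hder, hbet⟩ :=
      ih hs fun y hy => hfs y (Finset.mem_insert_of_mem hy)
    set y := s.max' hs
    have hyx : y < x := hlt y (s.max'_mem hs)
    obtain ⟨w, ⟨hyw, hwx⟩, hw⟩ := exists_deriv_eq_zero hyx hf.continuousOn
      (by rw [hfs y (Finset.mem_insert_of_mem (s.max'_mem hs)), hfs x (Finset.mem_insert_self x s)])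
    have hY : ∀ v ∈ Y, v < y := fun v hv => by
      obtain ⟨_, _, x', hx', _, hvx'⟩ := hbet v hv
      exact hvx'.trans_le (s.le_max' x' hx')
    have hws : w ∉ s := fun h => (s.le_max' w h).not_gt hyw
    refine ⟨insert w Y, ?_, ?_, ?_, ?_⟩
    · rw [Finset.card_insert_of_notMem fun h => (hY w h).not_gt hyw,
        Finset.card_insert_of_notMem hx, hcard]
    · rw [Finset.disjoint_insert_left, Finset.disjoint_insert_right, Finset.mem_insert]
      refine ⟨?_, hws, hdisj⟩
      rintro (h | h)
      · exact hwx.ne' h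
      · exact (hY x h).not_gt hyx
    · simpa [hw] using hder
    · rw [Finset.forall_mem_insert]
      refine ⟨⟨y, Finset.mem_insert_of_mem (s.max'_mem hs), x, Finset.mem_insert_self x s, hyw,
        hwx⟩, fun v hv => ?_⟩
      obtain ⟨x₁, hx₁, x₂, hx₂, h⟩ := hbet v hv
      exact ⟨x₁, Finset.mem_insert_of_mem hx₁, x₂, Finset.mem_insert_of_mem hx₂, h⟩

theorem exists_multiset_vanishesToOrder_deriv {f : ℝ → ℝ} (hf : Continuous f) {a b c : ℝ}
    {Z : Multiset ℝ} (hZ0 : Z ≠ 0) (hZ : ∀ x ∈ Z, x ∈ Set.Ioo a b) (hfZ : ∀ x ∈ Z, f x = c)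
    (hvan : ∀ x, VanishesToOrder (deriv f) x (Z.count x - 1)) :
    ∃ Z' : Multiset ℝ, Multiset.card Z' + 1 = Multiset.card Z ∧ (∀ x ∈ Z', x ∈ Set.Ioo a b) ∧
      ∀ x, VanishesToOrder (deriv f) x (Z'.count x) := by
  classical
  obtain ⟨Y, hcard, hdisj, hder, hbet⟩ := exists_finset_deriv_eq_zero_between hf Z.toFinset
    (Multiset.toFinset_nonempty.mpr hZ0) fun x hx => hfZ x (Multiset.mem_toFinset.mp hx)
  refine ⟨Z - Z.dedup + Y.val, ?_, ?_, fun x => ?_⟩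
  · have := Multiset.card_le_card (Multiset.dedup_le Z)
    rw [Multiset.card_toFinset] at hcard
    rw [Multiset.card_add, Multiset.card_sub (Multiset.dedup_le Z), Finset.card_val]
    omega
  · intro x hx
    rcases Multiset.mem_add.mp hx with hx | hx
    · exact hZ x (Multiset.mem_of_le (Multiset.sub_le_self _ _) hx)
    · obtain ⟨x₁, hx₁, x₂, hx₂, h₁, h₂⟩ := hbet x hx
      exact ⟨(hZ x₁ (Multiset.mem_toFinset.mp hx₁)).1.trans h₁,
        h₂.trans (hZ x₂ (Multiset.mem_toFinset.mp hx₂)).2⟩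
  · rw [Multiset.count_add, Multiset.count_sub, Multiset.count_dedup]
    by_cases hxY : x ∈ Y
    · have hxZ : x ∉ Z := fun h => Finset.disjoint_left.mp hdisj (Multiset.mem_toFinset.mpr h) hxY
      rw [Multiset.count_eq_zero_of_notMem hxZ, Multiset.count_eq_one_of_mem Y.nodup hxY]
      intro j hj
      obtain rfl : j = 0 := by simpa only [zero_tsub, zero_add, Nat.lt_one_iff] using hj
      simpa using hder x hxY
    · rw [Multiset.count_eq_zero_of_notMem hxY, add_zero]
      refine (hvan x).mono ?_
      split_ifs with hxZ
      · rfl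
      · rw [Multiset.count_eq_zero_of_notMem hxZ]

theorem exists_multiset_vanishesToOrder_deriv_of_jets {ι : Type*} [Fintype ι] {f : ℝ → ℝ}
    (hf : Continuous f) {t : ι → ℝ} (ht : Function.Injective t) {a b c : ℝ}
    (htab : ∀ i, t i ∈ Set.Ioo a b) {μ : ι → ℕ} (hμ : 0 < ∑ i, μ i) (hval : ∀ i, f (t i) = c)
    (hjet : ∀ i j, 1 ≤ j → j < μ i → iteratedDeriv j f (t i) = 0) :
    ∃ Z : Multiset ℝ, Multiset.card Z + 1 = ∑ i, μ i ∧ (∀ x ∈ Z, x ∈ Set.Ioo a b) ∧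
      ∀ x, VanishesToOrder (deriv f) x (Z.count x) := by
  classical
  set Z₀ : Multiset ℝ := ∑ i, μ i • {t i}
  have hcard : Multiset.card Z₀ = ∑ i, μ i := by simp [Z₀, Multiset.card_sum]
  have hmem : ∀ x ∈ Z₀, ∃ i, x = t i := fun x hx => by
    obtain ⟨i, -, hi⟩ := Multiset.mem_sum.mp hx
    exact ⟨i, Multiset.mem_singleton.mp (Multiset.mem_of_mem_nsmul hi)⟩
  have hcount : ∀ i, Z₀.count (t i) = μ i := fun i => by
    simp [Z₀, Multiset.count_sum', Multiset.count_singleton, ht.eq_iff]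
  obtain ⟨Z, hZcard, hZ, hvan⟩ := exists_multiset_vanishesToOrder_deriv hf (c := c)
    (Multiset.card_pos.mp (hcard ▸ hμ))
    (fun x hx => by obtain ⟨i, rfl⟩ := hmem x hx; exact htab i)
    (fun x hx => by obtain ⟨i, rfl⟩ := hmem x hx; exact hval i)
    fun x j hj => by
      obtain ⟨i, rfl⟩ := hmem x (Multiset.count_pos.mp (by omega))
      rw [← iteratedDeriv_succ']
      exact hjet i (j + 1) (by omega) (by rw [hcount] at hj; omega)
  exact ⟨Z, hcard ▸ hZcard, hZ, hvan⟩

theorem linearIndependent_of_forall_dotProduct_eq_zero {ι K : Type*} [Fintype ι] [Field K] {d : ℕ}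
    (V : ι → Fin d → K) (hcard : Fintype.card ι = d)
    (h : ∀ ξ : Fin d → K, (∀ v, V v ⬝ᵥ ξ = 0) → ξ = 0) : LinearIndependent K V := by
  classical
  let e : ι ≃ Fin d := Fintype.equivFinOfCardEq hcard
  let A : Matrix (Fin d) (Fin d) K := Matrix.of fun i => V (e.symm i)
  have hA : Function.Injective A.mulVec := by
    rw [← Matrix.coe_mulVecLin, injective_iff_map_eq_zero]
    refine fun ξ hξ => h ξ fun v => ?_
    simpa [A, Matrix.mulVec] using congrFun hξ (e v)
  exact (linearIndependent_equiv e.symm).mp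
    (Matrix.linearIndependent_rows_iff_isUnit.mpr (Matrix.mulVec_injective_iff_isUnit.mp hA))

theorem iteratedDeriv_dotProduct_const {d : ℕ} {g : ℝ → Fin d → ℝ} (hg : ContDiff ℝ ⊤ g)
    (ξ : Fin d → ℝ) (j : ℕ) (x : ℝ) :
    iteratedDeriv j (fun x => g x ⬝ᵥ ξ) x = iteratedDeriv j g x ⬝ᵥ ξ := by
  simpa [Function.comp_def, dotProduct_comm] using
    (LinearMap.toContinuousLinearMap (dotProductBilin ℝ ℝ ξ)).iteratedDeriv_comp_left hg j x

theorem contDiff_dotProduct_const {d : ℕ} {g : ℝ → Fin d → ℝ} (hg : ContDiff ℝ ⊤ g)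
    (ξ : Fin d → ℝ) : ContDiff ℝ ⊤ fun x => g x ⬝ᵥ ξ := by
  simpa [Function.comp_def, dotProduct_comm] using
    (LinearMap.toContinuousLinearMap (dotProductBilin ℝ ℝ ξ)).contDiff.comp hg

theorem Fin.sum_univ_two_mul {M : Type*} [AddCommMonoid M] {k : ℕ} (F : Fin (2 * k) → M) :
    ∑ i, F i = ∑ l : Fin k, (F ⟨2 * l, by omega⟩ + F ⟨2 * l + 1, by omega⟩) := by
  rw [← (finProdFinEquiv.trans (finCongr (Nat.mul_comm k 2))).sum_comp, Fintype.sum_prod_type]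
  refine Finset.sum_congr rfl fun l _ => ?_
  rw [Fin.sum_univ_two]
  congr 2 <;> ext <;> simp [finProdFinEquiv, add_comm]

noncomputable def symmetricMomentCurve (k : ℕ) (x : ℝ) : Fin (2 * k) → ℝ := fun i =>
  if (i : ℕ) % 2 = 0 then Real.cos (((i : ℕ) + 1 : ℝ) * x) else Real.sin (((i : ℕ) : ℝ) * x)

theorem contDiff_symmetricMomentCurve (k : ℕ) : ContDiff ℝ ⊤ (symmetricMomentCurve k) :=
  contDiff_pi.mpr fun i => by unfold symmetricMomentCurve; split_ifs <;> fun_prop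

def oddFrequency {k : ℕ} : Fin k ⊕ Fin k → ℤ :=
  Sum.elim (fun l => 2 * l + 1) (fun l => -(2 * l + 1))

theorem oddFrequency_injective {k : ℕ} : Function.Injective (oddFrequency (k := k)) := by
  rintro (l | l) (l' | l') h <;> simp only [oddFrequency, Sum.elim_inl, Sum.elim_inr] at h
  all_goals first | omega | (congr 1; ext; omega)

theorem odd_oddFrequency {k : ℕ} (p : Fin k ⊕ Fin k) : Odd (oddFrequency p) := by
  rcases p with l | l <;> simp [oddFrequency, parity_simps]

theorem natAbs_oddFrequency_le {k : ℕ} (p : Fin k ⊕ Fin k) :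
    (oddFrequency p).natAbs ≤ 2 * k - 1 := by
  rcases p with l | l <;> simp only [oddFrequency, Sum.elim_inl, Sum.elim_inr] <;> omega

noncomputable def momentCurveCoeff {k : ℕ} (ξ : Fin (2 * k) → ℝ) : Fin k ⊕ Fin k → ℂ :=
  Sum.elim (fun l => (ξ ⟨2 * l, by omega⟩ - I * ξ ⟨2 * l + 1, by omega⟩) / 2)
    (fun l => (ξ ⟨2 * l, by omega⟩ + I * ξ ⟨2 * l + 1, by omega⟩) / 2)

theorem symmetricMomentCurve_dotProduct_eq_sum_cexp {k : ℕ} (ξ : Fin (2 * k) → ℝ) (x : ℝ) :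
    ((symmetricMomentCurve k x ⬝ᵥ ξ : ℝ) : ℂ) =
      ∑ p, momentCurveCoeff ξ p * cexp (I * oddFrequency p * x) := by
  rw [dotProduct, Fin.sum_univ_two_mul, Fintype.sum_sum_type, ← Finset.sum_add_distrib,
    ofReal_sum]
  refine Finset.sum_congr rfl fun l _ => ?_
  simp only [symmetricMomentCurve, momentCurveCoeff, oddFrequency, Sum.elim_inl, Sum.elim_inr,
    Nat.mul_mod_right, Nat.mul_add_mod, if_true, show (1 : ℕ) % 2 ≠ 0 by norm_num, if_false]
  have h₁ : I * ((2 * (l : ℤ) + 1 : ℤ) : ℂ) * x = (2 * (l : ℕ) + 1 : ℂ) * x * I := by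
    push_cast; ring
  have h₂ : I * ((-(2 * (l : ℤ) + 1) : ℤ) : ℂ) * x = -((2 * (l : ℕ) + 1 : ℂ) * x) * I := by
    push_cast; ring
  rw [h₁, h₂]
  push_cast
  linear_combination (ξ ⟨2 * l, by omega⟩ : ℂ) / 2 * two_cos ((2 * (l : ℕ) + 1 : ℂ) * x) +
    (ξ ⟨2 * l + 1, by omega⟩ : ℂ) / 2 * two_sin ((2 * (l : ℕ) + 1 : ℂ) * x)

theorem eq_zero_of_momentCurveCoeff_inl_eq_zero {k : ℕ} {ξ : Fin (2 * k) → ℝ}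
    (h : ∀ l, momentCurveCoeff ξ (Sum.inl l) = 0) : ξ = 0 := by
  funext i
  obtain ⟨l, hl⟩ : ∃ l : Fin k, (i : ℕ) = 2 * l ∨ (i : ℕ) = 2 * l + 1 :=
    ⟨⟨i / 2, by omega⟩, by simp only; omega⟩
  have hre : ξ ⟨2 * l, by omega⟩ = 0 := by simpa [momentCurveCoeff] using congrArg re (h l)
  have him : ξ ⟨2 * l + 1, by omega⟩ = 0 := by simpa [momentCurveCoeff] using congrArg im (h l)
  rcases hl with hl | hl
  · rw [show i = ⟨2 * l, by omega⟩ from Fin.ext hl, hre, Pi.zero_apply]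
  · rw [show i = ⟨2 * l + 1, by omega⟩ from Fin.ext hl, him, Pi.zero_apply]

theorem eq_zero_of_card_zeros_deriv_symmetricMomentCurve_dotProduct {k : ℕ}
    {ξ : Fin (2 * k) → ℝ} {a : ℝ} {Z : Multiset ℝ} (hZ : ∀ x ∈ Z, x ∈ Set.Ioo a (a + π))
    (hcard : 2 * k - 1 < Multiset.card Z)
    (hvan : ∀ x, VanishesToOrder (deriv fun x => symmetricMomentCurve k x ⬝ᵥ ξ) x (Z.count x)) :
    ξ = 0 := by
  set f := fun x => symmetricMomentCurve k x ⬝ᵥ ξ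
  have hf : ContDiff ℝ ⊤ f := contDiff_dotProduct_const (contDiff_symmetricMomentCurve k) ξ
  have hcomp (j : ℕ) (x : ℝ) : iteratedDeriv j (fun x : ℝ => (f x : ℂ)) x = iteratedDeriv j f x :=
    ofRealCLM.iteratedDeriv_comp_left hf j x
  set c := momentCurveCoeff ξ
  have hg : (fun x : ℝ => (f x : ℂ)) = fun x : ℝ => ∑ p, c p * cexp (I * oddFrequency p * x) :=
    funext (symmetricMomentCurve_dotProduct_eq_sum_cexp ξ)
  have hg' : deriv (fun x : ℝ => (f x : ℂ)) =
      fun x : ℝ => ∑ p, c p * (I * oddFrequency p) * cexp (I * oddFrequency p * x) := by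
    simpa only [iteratedDeriv_one, pow_one, hg] using
      iteratedDeriv_sum_mul_cexp Finset.univ c (fun p => I * oddFrequency p) 1
  have hc := sum_mul_cexp_eq_zero_of_card_zeros_of_odd oddFrequency_injective odd_oddFrequency hZ
    natAbs_oddFrequency_le hcard fun x j hj => by
      rw [← hg', ← iteratedDeriv_succ', hcomp, iteratedDeriv_succ', hvan x j hj, ofReal_zero]
  refine eq_zero_of_momentCurveCoeff_inl_eq_zero fun l => ?_
  have := congrFun hc (Sum.inl l)
  simp only [oddFrequency, Sum.elim_inl, Pi.zero_apply, mul_eq_zero, I_ne_zero, false_or] at this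
  exact this.resolve_right (by push_cast; exact_mod_cast (by omega : (2 * (l : ℤ) + 1) ≠ 0))

theorem card_fin_sub_one_sum_sigma_sum_unit {n : ℕ} (hn : 1 ≤ n) {m : Fin n → ℕ}
    (hm : ∀ i, 1 ≤ m i) :
    Fintype.card (Fin (n - 1) ⊕ ((Σ i : Fin n, Fin (m i - 1)) ⊕ Unit)) = ∑ i, m i := by
  have : ∑ i, (m i - 1) + n = ∑ i, m i := by
    calc ∑ i, (m i - 1) + n = ∑ i, (m i - 1 + 1) := by simp [Finset.sum_add_distrib]
      _ = ∑ i, m i := Finset.sum_congr rfl fun i _ => Nat.sub_add_cancel (hm i)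
  simp only [Fintype.card_sum, Fintype.card_sigma, Fintype.card_fin, Fintype.card_unit]
  omega

theorem symmetric_moment_curve_linearIndependent (k n : ℕ) (hk : 1 ≤ k) (hn : 1 ≤ n)
    (U : ℝ → (Fin (2 * k) → ℝ))
    (hU : ∀ s : ℝ, ∀ i : Fin (2 * k),
      U s i = if (i : ℕ) % 2 = 0 then Real.cos (((i : ℕ) + 1 : ℝ) * s)
        else Real.sin (((i : ℕ) : ℝ) * s))
    (α : ℝ) (t : Fin n → ℝ) (ht : ∀ i, t i ∈ Set.Ioo α (α + Real.pi))
    (htinj : Function.Injective t)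
    (m : Fin n → ℕ) (hm : ∀ i, 1 ≤ m i) (hsum : ∑ i, m i = 2 * k)
    (V : (Fin (n - 1) ⊕ ((Σ i : Fin n, Fin (m i - 1)) ⊕ Unit)) → (Fin (2 * k) → ℝ))
    (hV1 : ∀ i : Fin (n - 1), V (Sum.inl i) = U (t ⟨i, lt_of_lt_of_le i.2 (Nat.sub_le n 1)⟩) - U (t ⟨n - 1, Nat.sub_lt hn Nat.one_pos⟩))
    (hV2 : ∀ p : (Σ i : Fin n, Fin (m i - 1)), V (Sum.inr (Sum.inl p)) = iteratedDeriv ((p.2 : ℕ) + 1) U (t p.1))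
    (hV3 : V (Sum.inr (Sum.inr ())) = iteratedDeriv (m ⟨0, hn⟩) U (t ⟨0, hn⟩)) :
    LinearIndependent ℝ V := by
  obtain rfl : U = symmetricMomentCurve k := funext fun s => funext (hU s)
  refine linearIndependent_of_forall_dotProduct_eq_zero V
    ((card_fin_sub_one_sum_sigma_sum_unit hn hm).trans hsum) fun ξ hξ => ?_
  set f := fun x => symmetricMomentCurve k x ⬝ᵥ ξ
  set i₀ : Fin n := ⟨0, hn⟩
  have hval : ∀ i, f (t i) = f (t ⟨n - 1, Nat.sub_lt hn Nat.one_pos⟩) := fun i => by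
    by_cases hi : (i : ℕ) < n - 1
    · have := hξ (Sum.inl ⟨i, hi⟩)
      rwa [hV1, sub_dotProduct, sub_eq_zero] at this
    · rw [show i = ⟨n - 1, Nat.sub_lt hn Nat.one_pos⟩ from Fin.ext (by simp only; omega)]
  have hjet (i : Fin n) (j : ℕ) (hj₁ : 1 ≤ j) (hj : j < m i + if i = i₀ then 1 else 0) :
      iteratedDeriv j f (t i) = 0 := by
    rw [iteratedDeriv_dotProduct_const (contDiff_symmetricMomentCurve k)]
    obtain hj | ⟨rfl, rfl⟩ : j < m i ∨ (i = i₀ ∧ j = m i₀) := by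
      split_ifs at hj with h
      · subst h; omega
      · omega
    · have := hξ (Sum.inr (Sum.inl ⟨i, ⟨j - 1, by omega⟩⟩))
      rwa [hV2, Nat.sub_add_cancel hj₁] at this
    · have := hξ (Sum.inr (Sum.inr ()))
      rwa [hV3] at this
  have hμ : ∑ i, (m i + if i = i₀ then 1 else 0) = 2 * k + 1 := by
    rw [Finset.sum_add_distrib, hsum, Finset.sum_ite_eq']
    simp
  obtain ⟨Z, hZcard, hZ, hvan⟩ := exists_multiset_vanishesToOrder_deriv_of_jets
    (contDiff_dotProduct_const (contDiff_symmetricMomentCurve k) ξ).continuous htinj ht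
    (by omega) hval hjet
  exact eq_zero_of_card_zeros_deriv_symmetricMomentCurve_dotProduct hZ (by omega) hvan
end

section
/- Let f be the unique raked trigonometric polynomial of degree at most 2k-1 with constant term 1 having a root of multiplicity 2m at t = 0 and a root of multiplicity 2n at t = π/2, where m, n are positive integers with m + n = k. Then f(t) ≥ 1 for all t with π ≤ t ≤ 3π/2. -/
/-!
Write `f = 1 + a + b` with `a` the cosine part and `b` the sine part. Both parts are antiperiodic
with period `π`, so `f (s + π) = 1 - a s - b s`, and it suffices to show `a ≤ 0` and `b ≤ 0` on
`[0, π/2]`. The substitution `t ↦ π/2 - t` exchanges the two parts (and the roles of `m` and `n`),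
so only `a ≤ 0` needs proof.

By Chebyshev, `a t = P (cos t)` for an odd polynomial `P` of degree at most `2k - 1`. Since
`1 + a` is the even part of `f` and `a` is odd about `π/2`, the roots of `f` give
`(X - 1)^m ∣ 1 + P` and `X^(2n) ∣ P`; oddness upgrades these to `X^(2n+1) ∣ P` and
`(X + 1)^m ∣ 1 - P`. Hence `X^(2n) (1 - X²)^(m-1)`, of degree `2k - 2`, divides `P'`, so
`P' = c X^(2n) (1 - X²)^(m-1)`. As `P 0 = 0 > -1 = P 1`, `c < 0` and `P ≤ 0` on `[0, 1]`.
-/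

open Real Finset Polynomial

section AnalyticOrder

variable {𝕜 : Type*} [NontriviallyNormedField 𝕜]

theorem Polynomial.analyticAt_eval (Q : 𝕜[X]) (z : 𝕜) : AnalyticAt 𝕜 (fun x => Q.eval x) z := by
  have := (analyticAt_id (𝕜 := 𝕜) (z := z)).aeval_polynomial Q
  simp only [coe_aeval_eq_eval, id] at this
  exact this

theorem Polynomial.analyticOrderAt_eval_s16 {Q : 𝕜[X]} (hQ : Q ≠ 0) (z : 𝕜) :
    analyticOrderAt (fun x => Q.eval x) z = Q.rootMultiplicity z := by
  obtain ⟨R, hQR, hR⟩ := Q.exists_eq_pow_rootMultiplicity_mul_and_not_dvd hQ z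
  rw [(Q.analyticAt_eval z).analyticOrderAt_eq_natCast]
  refine ⟨fun x => R.eval x, R.analyticAt_eval z, ?_, ?_⟩
  · rwa [dvd_iff_isRoot] at hR
  · refine Filter.Eventually.of_forall fun x => ?_
    conv_lhs => rw [hQR]
    simp

variable [CharZero 𝕜] [CompleteSpace 𝕜]

theorem pow_X_sub_C_dvd_of_iteratedDeriv_eval_comp_eq_zero {Q : 𝕜[X]} {g : 𝕜 → 𝕜} {z₀ : 𝕜}
    {d i : ℕ} (hg : AnalyticAt 𝕜 g z₀) (hd : analyticOrderAt (g · - g z₀) z₀ = d) (hd0 : d ≠ 0)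
    (hQ : ∀ r < d * i, iteratedDeriv r (fun z => Q.eval (g z)) z₀ = 0) :
    (X - C (g z₀)) ^ i ∣ Q := by
  rcases eq_or_ne Q 0 with rfl | hQ0
  · exact dvd_zero _
  have hQg : AnalyticAt 𝕜 (fun z => Q.eval (g z)) z₀ := (Q.analyticAt_eval _).comp hg
  have horder : analyticOrderAt (fun z => Q.eval (g z)) z₀ = Q.rootMultiplicity (g z₀) * d := by
    rw [← Q.analyticOrderAt_eval_s16 hQ0, ← hd]
    exact (Q.analyticAt_eval _).analyticOrderAt_comp hg
  rw [← natCast_le_analyticOrderAt_iff_iteratedDeriv_eq_zero hQg, horder, mul_comm d] at hQ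
  norm_cast at hQ
  exact (le_rootMultiplicity_iff hQ0).mp (Nat.le_of_mul_le_mul_right hQ (Nat.pos_of_ne_zero hd0))

end AnalyticOrder

theorem analyticOrderAt_cos_sub_cos_zero : analyticOrderAt (cos · - cos 0) 0 = 2 := by
  rw [show (2 : ℕ∞) = ((2 : ℕ) : ℕ∞) from rfl,
    analyticOrderAt_eq_nat_iff_iteratedDeriv_eq_zero (by fun_prop)]
  refine ⟨fun r hr => ?_, ?_⟩
  · interval_cases r <;> simp
  · rw [iteratedDeriv_fun_sub (by fun_prop) (by fun_prop)]
    simp [iteratedDeriv_const]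

theorem analyticOrderAt_cos_sub_cos_pi_div_two :
    analyticOrderAt (cos · - cos (π / 2)) (π / 2) = 1 :=
  analyticAt_cos.analyticOrderAt_sub_eq_one_of_deriv_ne_zero (by simp)

section OddPolynomial

variable {K : Type*} [Field K] [CharZero K] {P : K[X]}

theorem X_pow_succ_dvd_of_comp_neg_X {n : ℕ} (hodd : P.comp (-X) = -P)
    (h : X ^ (2 * n) ∣ P) : X ^ (2 * n + 1) ∣ P := by
  obtain ⟨Q, rfl⟩ := h
  have hQ : Q.comp (-X) = -Q := by
    refine mul_left_cancel₀ (pow_ne_zero (2 * n) X_ne_zero) ?_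
    rw [mul_comp, pow_comp, X_comp, Even.neg_pow ⟨n, two_mul n⟩] at hodd
    rw [hodd, mul_neg]
  have hQ0 : Q.eval 0 = 0 := by
    simpa [eval_comp, self_eq_neg] using congrArg (eval 0) hQ
  rw [pow_succ]
  exact mul_dvd_mul_left _ (X_dvd_iff.mpr (by rwa [coeff_zero_eq_eval_zero]))

theorem exists_derivative_eq_C_mul_of_comp_neg_X {m n : ℕ} (hm : 1 ≤ m)
    (hodd : P.comp (-X) = -P) (hdeg : P.natDegree ≤ 2 * (m + n) - 1)
    (hX : X ^ (2 * n) ∣ P) (hX1 : (X - 1) ^ m ∣ 1 + P) :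
    ∃ c, derivative P = C c * (X ^ (2 * n) * (1 - X ^ 2) ^ (m - 1)) := by
  have hXP' : X ^ (2 * n) ∣ derivative P := by
    simpa using pow_sub_one_dvd_derivative_of_pow_dvd (X_pow_succ_dvd_of_comp_neg_X hodd hX)
  have hX1P' : (X - 1) ^ (m - 1) ∣ derivative P := by
    simpa using pow_sub_one_dvd_derivative_of_pow_dvd hX1
  have hX2 : (-X - 1) ^ m ∣ 1 - P := by
    simpa [hodd, ← sub_eq_add_neg] using map_dvd (compRingHom (-X)) hX1
  have hX2P' : (X + 1) ^ (m - 1) ∣ derivative P := by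
    rw [← ((Associated.refl (X + 1 : K[X])).neg_left.pow_pow).dvd_iff_dvd_left, neg_add']
    simpa using pow_sub_one_dvd_derivative_of_pow_dvd hX2
  have hcop : IsCoprime (X - 1 : K[X]) (X + 1) := by
    simpa using isCoprime_X_sub_C_of_isUnit_sub (R := K) (a := 1) (b := -1) (by norm_num)
  have hD : X ^ (2 * n) * ((X - 1) ^ (m - 1) * (X + 1) ^ (m - 1)) ∣ derivative P := by
    refine IsCoprime.mul_dvd ?_ hXP' (hcop.pow.mul_dvd hX1P' hX2P')
    refine IsCoprime.pow_left (IsCoprime.mul_right (IsCoprime.pow_right ?_)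
      (IsCoprime.pow_right ?_))
    · exact ⟨1, -1, by ring⟩
    · exact ⟨-1, 1, by ring⟩
  have hmonic₁ : ((X - 1 : K[X]) ^ (m - 1)).Monic := by simpa using (monic_X_sub_C (1 : K)).pow _
  have hmonic₂ : ((X + 1 : K[X]) ^ (m - 1)).Monic := by simpa using (monic_X_add_C (1 : K)).pow _
  rw [eq_leadingCoeff_mul_of_monic_of_dvd_of_natDegree_le
    ((monic_X_pow _).mul (hmonic₁.mul hmonic₂)) hD ?_]
  · refine ⟨(derivative P).leadingCoeff * (-1) ^ (m - 1), ?_⟩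
    rw [← mul_pow, show (X - 1 : K[X]) * (X + 1) = -(1 - X ^ 2) by ring, neg_pow]
    simp only [map_mul, map_pow, map_neg, map_one]
    ring
  · rw [(monic_X_pow _).natDegree_mul (hmonic₁.mul hmonic₂), hmonic₁.natDegree_mul hmonic₂]
    have h₁ : (X - 1 : K[X]).natDegree = 1 := by simpa using natDegree_X_sub_C (1 : K)
    have h₂ : (X + 1 : K[X]).natDegree = 1 := by simpa using natDegree_X_add_C (1 : K)
    simp only [natDegree_pow, natDegree_X, h₁, h₂]
    have := natDegree_derivative_le P
    omega

end OddPolynomial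

theorem antitoneOn_of_deriv_eq_const_mul {φ h : ℝ → ℝ} {c a b : ℝ} (hφ : Differentiable ℝ φ)
    (hφ' : ∀ x ∈ Set.Ioo a b, deriv φ x = c * h x) (hh : ∀ x ∈ Set.Ioo a b, 0 ≤ h x)
    (hba : φ b < φ a) : AntitoneOn φ (Set.Icc a b) := by
  rcases lt_or_ge b a with hab | hab
  · rw [Set.Icc_eq_empty_of_lt hab]
    exact Set.subsingleton_empty.antitoneOn φ
  have hc : c ≤ 0 := by
    by_contra! hc
    have hmono : MonotoneOn φ (Set.Icc a b) :=
      monotoneOn_of_deriv_nonneg (convex_Icc a b) hφ.continuous.continuousOn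
        hφ.differentiableOn fun x hx => by
          rw [interior_Icc] at hx
          rw [hφ' x hx]
          exact mul_nonneg hc.le (hh x hx)
    exact (hmono ⟨le_rfl, hab⟩ ⟨hab, le_rfl⟩ hab).not_gt hba
  refine antitoneOn_of_deriv_nonpos (convex_Icc a b) hφ.continuous.continuousOn
    hφ.differentiableOn fun x hx => ?_
  rw [interior_Icc] at hx
  rw [hφ' x hx]
  exact mul_nonpos_of_nonpos_of_nonneg hc (hh x hx)

theorem eval_nonpos_of_comp_neg_X {P : ℝ[X]} {m n : ℕ} (hm : 1 ≤ m)
    (hodd : P.comp (-X) = -P) (hdeg : P.natDegree ≤ 2 * (m + n) - 1)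
    (hX : X ^ (2 * n) ∣ P) (hX1 : (X - 1) ^ m ∣ 1 + P) :
    ∀ x ∈ Set.Icc (0 : ℝ) 1, P.eval x ≤ 0 := by
  obtain ⟨c, hc⟩ := exists_derivative_eq_C_mul_of_comp_neg_X hm hodd hdeg hX hX1
  have hP0 : P.eval 0 = 0 := by
    simpa [eval_comp, self_eq_neg] using congrArg (eval 0) hodd
  have hP1 : P.eval 1 = -1 := by
    have : X - C 1 ∣ 1 + P := by simpa using (dvd_pow_self (X - 1) (by omega)).trans hX1
    rw [dvd_iff_isRoot, IsRoot, eval_add, eval_one] at this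
    linarith
  have hD : ∀ x ∈ Set.Ioo (0 : ℝ) 1, 0 ≤ x ^ (2 * n) * (1 - x ^ 2) ^ (m - 1) := fun x hx => by
    have : 0 ≤ 1 - x ^ 2 := by nlinarith [hx.1, hx.2]
    exact mul_nonneg (pow_nonneg hx.1.le _) (pow_nonneg this _)
  have hanti := antitoneOn_of_deriv_eq_const_mul (φ := fun x => P.eval x) (c := c)
    P.differentiable (fun x _ => by simp [hc]) hD (by simp only [hP0, hP1]; norm_num)
  intro x hx
  rw [← hP0]
  exact hanti ⟨le_rfl, zero_le_one⟩ hx hx.1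

noncomputable def rakedCos (a : ℕ → ℝ) (k : ℕ) (t : ℝ) : ℝ :=
  ∑ j ∈ range k, a j * cos ((2 * (j : ℝ) + 1) * t)

noncomputable def rakedSin (b : ℕ → ℝ) (k : ℕ) (t : ℝ) : ℝ :=
  ∑ j ∈ range k, b j * sin ((2 * (j : ℝ) + 1) * t)

section Raked

variable (a b : ℕ → ℝ) (k : ℕ) (t : ℝ)

theorem odd_mul_add_pi (j : ℕ) :
    (2 * (j : ℝ) + 1) * (t + π) = (2 * (j : ℝ) + 1) * t + (2 * j + 1 : ℕ) * π := by
  push_cast; ring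

theorem odd_mul_pi_div_two_sub (j : ℕ) :
    (2 * (j : ℝ) + 1) * (π / 2 - t) = π / 2 - (2 * (j : ℝ) + 1) * t + j * π := by
  ring

theorem rakedCos_neg : rakedCos a k (-t) = rakedCos a k t := by
  simp [rakedCos]

theorem rakedSin_neg : rakedSin b k (-t) = -rakedSin b k t := by
  simp [rakedSin]

theorem rakedCos_add_pi : rakedCos a k (t + π) = -rakedCos a k t := by
  rw [rakedCos, rakedCos, ← sum_neg_distrib]
  refine sum_congr rfl fun j _ => ?_
  rw [odd_mul_add_pi, cos_add_nat_mul_pi, Odd.neg_one_pow ⟨j, rfl⟩]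
  ring

theorem rakedSin_add_pi : rakedSin b k (t + π) = -rakedSin b k t := by
  rw [rakedSin, rakedSin, ← sum_neg_distrib]
  refine sum_congr rfl fun j _ => ?_
  rw [odd_mul_add_pi, sin_add_nat_mul_pi, Odd.neg_one_pow ⟨j, rfl⟩]
  ring

theorem rakedCos_pi_sub : rakedCos a k (π - t) = -rakedCos a k t := by
  rw [sub_eq_neg_add, rakedCos_add_pi, rakedCos_neg]

theorem rakedSin_pi_sub : rakedSin b k (π - t) = rakedSin b k t := by
  rw [sub_eq_neg_add, rakedSin_add_pi, rakedSin_neg, neg_neg]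

theorem rakedCos_pi_div_two_sub :
    rakedCos a k (π / 2 - t) = rakedSin (fun j => (-1) ^ j * a j) k t := by
  refine sum_congr rfl fun j _ => ?_
  rw [odd_mul_pi_div_two_sub, cos_add_nat_mul_pi, cos_pi_div_two_sub]
  ring

theorem rakedSin_pi_div_two_sub :
    rakedSin b k (π / 2 - t) = rakedCos (fun j => (-1) ^ j * b j) k t := by
  refine sum_congr rfl fun j _ => ?_
  rw [odd_mul_pi_div_two_sub, sin_add_nat_mul_pi, sin_pi_div_two_sub]
  ring

end Raked

theorem exists_odd_polynomial_eval_cos_eq_rakedCos (a : ℕ → ℝ) (k : ℕ) :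
    ∃ P : ℝ[X], P.comp (-X) = -P ∧ P.natDegree ≤ 2 * k - 1 ∧
      ∀ t, P.eval (cos t) = rakedCos a k t := by
  refine ⟨∑ j ∈ range k, C (a j) * Chebyshev.T ℝ (2 * j + 1), ?_, ?_, fun t => ?_⟩
  · refine Polynomial.funext fun x => ?_
    simp [eval_comp, eval_finsetSum, Chebyshev.T_eval_neg,
      Int.negOnePow_odd _ (odd_two_mul_add_one _)]
  · refine natDegree_sum_le_of_forall_le _ _ fun j hj => (natDegree_C_mul_le _ _).trans ?_
    rw [Chebyshev.natDegree_T]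
    have := mem_range.mp hj
    omega
  · simp [eval_finsetSum, Chebyshev.T_real_cos, rakedCos]

theorem rakedCos_nonpos {k m n : ℕ} (hm : 1 ≤ m) (hmn : m + n = k) {a b : ℕ → ℝ} {f : ℝ → ℝ}
    (hf : ∀ t, f t = 1 + rakedCos a k t + rakedSin b k t)
    (h0 : ∀ r < 2 * m, iteratedDeriv r f 0 = 0)
    (h1 : ∀ r < 2 * n, iteratedDeriv r f (π / 2) = 0) :
    ∀ t ∈ Set.Icc 0 (π / 2), rakedCos a k t ≤ 0 := by
  obtain ⟨P, hodd, hdeg, hP⟩ := exists_odd_polynomial_eval_cos_eq_rakedCos a k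
  have hf_smooth : ∀ r : ℕ, ContDiff ℝ r f := fun r => by
    rw [funext hf]
    unfold rakedCos rakedSin
    fun_prop
  have hevenPart : (fun t => (1 + P).eval (cos t)) = fun t => 2⁻¹ * (f t + f (-t)) := by
    funext t
    simp only [eval_add, eval_one, hP, hf, rakedCos_neg, rakedSin_neg]
    ring
  have hoddPart : (fun t => P.eval (cos t)) = fun t => 2⁻¹ * (f t - f (π - t)) := by
    funext t
    simp only [hP, hf, rakedCos_pi_sub, rakedSin_pi_sub]
    ring
  have hX1 : (X - 1) ^ m ∣ 1 + P := by
    simpa using pow_X_sub_C_dvd_of_iteratedDeriv_eval_comp_eq_zero (Q := 1 + P) (i := m)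
      analyticAt_cos analyticOrderAt_cos_sub_cos_zero two_ne_zero fun r hr => by
        rw [hevenPart, iteratedDeriv_const_mul_field,
          iteratedDeriv_fun_add (by fun_prop) (by fun_prop), iteratedDeriv_comp_neg, neg_zero,
          h0 r hr]
        simp
  have hX : X ^ (2 * n) ∣ P := by
    simpa using pow_X_sub_C_dvd_of_iteratedDeriv_eval_comp_eq_zero (Q := P) (i := 2 * n)
      analyticAt_cos analyticOrderAt_cos_sub_cos_pi_div_two one_ne_zero fun r hr => by
        rw [hoddPart, iteratedDeriv_const_mul_field,
          iteratedDeriv_fun_sub (by fun_prop) (by fun_prop), iteratedDeriv_comp_const_sub]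
        simp [sub_half, h1 r (by omega)]
  intro t ht
  rw [← hP]
  exact eval_nonpos_of_comp_neg_X hm hodd (hmn ▸ hdeg) hX hX1 _
    ⟨cos_nonneg_of_mem_Icc ⟨by linarith [ht.1, pi_pos], ht.2⟩, cos_le_one t⟩

theorem rakedSin_nonpos {k m n : ℕ} (hn : 1 ≤ n) (hmn : m + n = k) {a b : ℕ → ℝ} {f : ℝ → ℝ}
    (hf : ∀ t, f t = 1 + rakedCos a k t + rakedSin b k t)
    (h0 : ∀ r < 2 * m, iteratedDeriv r f 0 = 0)
    (h1 : ∀ r < 2 * n, iteratedDeriv r f (π / 2) = 0) :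
    ∀ t ∈ Set.Icc 0 (π / 2), rakedSin b k t ≤ 0 := by
  intro t ht
  have := rakedCos_nonpos (k := k) (m := n) (n := m) hn (by omega) (a := fun j => (-1) ^ j * b j)
    (b := fun j => (-1) ^ j * a j) (f := fun s => f (π / 2 - s))
    (fun s => by rw [hf, rakedCos_pi_div_two_sub, rakedSin_pi_div_two_sub]; ring)
    (fun r hr => by simp [iteratedDeriv_comp_const_sub, h1 r hr])
    (fun r hr => by simp [iteratedDeriv_comp_const_sub, h0 r hr])
    (π / 2 - t) ⟨by linarith [ht.2], by linarith [ht.1]⟩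
  rwa [← rakedSin_pi_div_two_sub, sub_sub_cancel] at this

theorem raked_ge_one_on_third_quadrant (k m n : ℕ) (hm : 1 ≤ m) (hn : 1 ≤ n)
    (hmn : m + n = k)
    (a b : ℕ → ℝ) (f : ℝ → ℝ)
    (hf : ∀ t : ℝ, f t = 1 + ∑ j ∈ Finset.range k,
        (a j * Real.cos ((2 * (j : ℝ) + 1) * t) + b j * Real.sin ((2 * (j : ℝ) + 1) * t)))
    (hroot0 : (∀ r < 2 * m, iteratedDeriv r f 0 = 0) ∧ iteratedDeriv (2 * m) f 0 ≠ 0)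
    (hroot1 : (∀ r < 2 * n, iteratedDeriv r f (Real.pi / 2) = 0) ∧
      iteratedDeriv (2 * n) f (Real.pi / 2) ≠ 0) :
    ∀ t ∈ Set.Icc Real.pi (3 * Real.pi / 2), 1 ≤ f t := by
  have hf' : ∀ t, f t = 1 + rakedCos a k t + rakedSin b k t := fun t => by
    rw [hf, sum_add_distrib, add_assoc, rakedCos, rakedSin]
  rintro t ⟨ht₁, ht₂⟩
  have hs : t - π ∈ Set.Icc 0 (π / 2) := ⟨by linarith, by linarith⟩
  have hcos := rakedCos_nonpos hm hmn hf' hroot0.1 hroot1.1 (t - π) hs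
  have hsin := rakedSin_nonpos hn hmn hf' hroot0.1 hroot1.1 (t - π) hs
  rw [hf', show t = t - π + π by ring, rakedCos_add_pi, rakedSin_add_pi]
  linarith
end

section
/- Let k ≥ 2 and let β_k ∈ (π/2, π) satisfy sin^2(β_k) h_{k-1}(β_k) = h_k(β_k), where h_k(t) = ∫_0^t sin^{2k-1}(τ) dτ. Define f_k(t) = sin^2(β_k) h_{k-1}(t) - h_k(t). Then f_k(π) > 0. -/
open Real

theorem f_k_pos_at_pi (k : ℕ) (hk : 2 ≤ k)
    (h : ℕ → ℝ → ℝ)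
    (hh : ∀ m : ℕ, ∀ t : ℝ, h m t = ∫ τ in (0:ℝ)..t, Real.sin τ ^ (2 * m - 1))
    (β : ℝ) (hβ : β ∈ Set.Ioo (Real.pi / 2) Real.pi)
    (heq : Real.sin β ^ 2 * h (k - 1) β = h k β)
    (f : ℝ → ℝ)
    (hf : ∀ t : ℝ, f t = Real.sin β ^ 2 * h (k - 1) t - h k t) :
    0 < f Real.pi := by
  obtain ⟨m, rfl⟩ : ∃ m, k = m + 2 := ⟨k - 2, by omega⟩
  have hn1 : 2 * (m + 2) - 1 = (2 * m + 1) + 2 := by omega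
  have hn2 : 2 * (m + 2 - 1) - 1 = 2 * m + 1 := by omega
  have hred : m + 2 - 1 = m + 1 := rfl
  rw [hred] at heq hf
  -- reduction formula
  have hrec : ∀ t : ℝ,
      h (m + 2) t = (0 - Real.sin t ^ (2 * m + 2) * Real.cos t) / (2 * m + 3)
        + (2 * m + 2) / (2 * m + 3) * h (m + 1) t := by
    intro t
    rw [hh, hh, hn1, show 2 * (m + 1) - 1 = 2 * m + 1 from by omega, integral_sin_pow (2 * m + 1)]
    have h0 : Real.sin (0:ℝ) ^ (2 * m + 1 + 1) = 0 := by
      simp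
    rw [Real.cos_zero, h0]
    push_cast
    generalize (∫ x in (0:ℝ)..t, Real.sin x ^ (2 * m + 1)) = I
    ring
  -- positivity of h (m+1) on (0, π]
  have hpos : ∀ t : ℝ, 0 < t → t ≤ Real.pi → 0 < h (m + 1) t := by
    intro t ht0 htπ
    rw [hh]
    rw [show 2 * (m+1) - 1 = 2*m+1 from by omega]
    apply intervalIntegral.intervalIntegral_pos_of_pos_on
    · exact (Continuous.intervalIntegrable (by continuity) 0 t)
    · intro x hx
      exact pow_pos (Real.sin_pos_of_pos_of_lt_pi hx.1 (lt_of_lt_of_le hx.2 htπ)) _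
    · exact ht0
  obtain ⟨hβ1, hβ2⟩ := hβ
  have hπ : 0 < Real.pi := Real.pi_pos
  have hβ0 : 0 < β := lt_trans (by linarith) hβ1
  have hS : 0 < Real.sin β := Real.sin_pos_of_pos_of_lt_pi hβ0 hβ2
  have hC : Real.cos β < 0 := Real.cos_neg_of_pi_div_two_lt_of_lt hβ1 (by linarith)
  have hHβ : 0 < h (m + 1) β := hpos β hβ0 (le_of_lt hβ2)
  have hHπ : 0 < h (m + 1) Real.pi := hpos _ hπ le_rfl
  -- key: sin β ^ 2 > (2m+2)/(2m+3)
  have hkey : (2 * (m:ℝ) + 2) / (2 * m + 3) < Real.sin β ^ 2 := by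
    have e := hrec β
    rw [← heq] at e
    have hSp : 0 < Real.sin β ^ (2 * m + 2) := pow_pos hS _
    have e2 : (2 * (m:ℝ) + 3) * (Real.sin β ^ 2 * h (m + 1) β)
        = -(Real.sin β ^ (2 * m + 2) * Real.cos β)
          + (2 * m + 2) * h (m + 1) β := by
      rw [e]
      have h3 : (2 * (m:ℝ) + 3) ≠ 0 := by positivity
      field_simp
      ring
    rw [div_lt_iff₀ (by positivity)]
    nlinarith [mul_pos hSp (neg_pos.mpr hC), e2, hHβ]
  -- value at π
  have hπval : h (m + 2) Real.pi = (2 * m + 2) / (2 * m + 3) * h (m + 1) Real.pi := by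
    rw [hrec Real.pi]
    simp [pow_succ]
  rw [hf, hπval]
  nlinarith [mul_pos (sub_pos.mpr hkey) hHπ]
end
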